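/- arXiv:2209.07675 — 5 statements merged into one kernel-verified Lean document; each statement's English description precedes it below -/
import Mathlib

section
/- Let 𝒦 be a Noetherian integral domain with fraction field K, 𝔄 ⊆ 𝔅 as above (𝔅 an order in 𝔄_K containing 𝔄), and let M, M' be 𝔅-modules, finite and torsion-free over 𝒦. Then M ≅ M' as 𝔅-modules if and only if M|_𝔄 ≅ M'|_𝔄 as 𝔄-modules. Moreover, if M|_𝔄 decomposes as a direct sum N₁ ⊕ N₂ of 𝔄-submodules, then M decomposes as M₁ ⊕ M₂ in 𝔅-modules with M_i|_𝔄 ≅ N_i. -/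
/-!
Every `b ∈ 𝔅` has a multiple `s • b`, with `s ∈ 𝒦` regular, lying in the image of `𝔄`:
clear the denominators of `j b ∈ K ⊗ 𝔄`. Hence for an `𝔄`-linear map `f` into a `𝒦`-torsion-free
module, `s • f (b • m) = f ((s • b) • m) = s • b • f m`, and cancelling `s` shows that `f` is
`𝔅`-linear. This gives the isomorphism statement, and applied to the projection onto `N₁` along
`N₂` it shows that `N₁` and `N₂` are already `𝔅`-submodules.
-/

open scoped TensorProduct nonZeroDivisors

theorem exists_mem_smul_eq_of_map_eq_one_tmul {R L A B : Type*} [CommRing R] [CommRing L]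
    [Algebra R L] (S : Submonoid R) [IsLocalization S L] [AddCommGroup A] [Module R A]
    [AddCommGroup B] [Module R B] (i : A → B) (j : B →ₗ[R] L ⊗[R] A)
    (hj : Function.Injective j) (hij : ∀ a, j (i a) = 1 ⊗ₜ a) (b : B) :
    ∃ s ∈ S, ∃ a, s • b = i a := by
  obtain ⟨⟨a, s⟩, hs⟩ := IsLocalizedModule.surj S (TensorProduct.mk R L A 1) (j b)
  exact ⟨s, s.2, a, hj <| by rw [map_smul, hij]; exact hs⟩

section Restriction

variable {𝒦 A B M M' : Type*} [CommRing 𝒦] [Ring A] [Ring B] [Algebra 𝒦 A] [Algebra 𝒦 B]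
  {φ : A →ₐ[𝒦] B} (hφ : ∀ b : B, ∃ s ∈ 𝒦⁰, ∃ a, s • b = φ a)
  [AddCommGroup M] [Module A M] [Module B M] [Module 𝒦 M] [IsScalarTower 𝒦 B M]
  [AddCommGroup M'] [Module A M'] [Module B M'] [Module 𝒦 M'] [IsScalarTower 𝒦 B M']
include hφ

theorem LinearMap.map_smul_of_exists_smul_eq [Module.IsTorsionFree 𝒦 M']
    (hM : ∀ (a : A) (m : M), a • m = φ a • m) (hM' : ∀ (a : A) (m : M'), a • m = φ a • m)
    (f : M →ₗ[A] M') (b : B) (m : M) : f (b • m) = b • f m := by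
  obtain ⟨s, hs, a, hsb⟩ := hφ b
  have hfs : ∀ x, f (s • x) = s • f x := fun x => by
    simpa only [hM, hM', AlgHom.commutes, algebraMap_smul] using f.map_smul (algebraMap 𝒦 A s) x
  apply (isRegular_iff_mem_nonZeroDivisors.mpr hs).smul_right_injective M'
  calc s • f (b • m) = f ((s • b) • m) := by rw [← hfs, smul_assoc]
    _ = (s • b) • f m := by rw [hsb, ← hM, f.map_smul, hM']
    _ = s • b • f m := smul_assoc ..

theorem Submodule.smul_mem_of_isCompl [Module.IsTorsionFree 𝒦 M]
    (hM : ∀ (a : A) (m : M), a • m = φ a • m) {N N' : Submodule A M} (h : IsCompl N N') :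
    ∀ (b : B), ∀ m ∈ N, b • m ∈ N := by
  intro b m hm
  have hπ := (N.projection N' h).map_smul_of_exists_smul_eq hφ hM hM b m
  rw [projection_apply_of_mem_left h hm] at hπ
  exact hπ ▸ projection_apply_mem h _

end Restriction

namespace Submodule

variable {A B M : Type*} [Ring A] [Ring B] [AddCommGroup M] [Module A M] [Module B M]

def ofSMulMem (N : Submodule A M) (h : ∀ (b : B), ∀ m ∈ N, b • m ∈ N) : Submodule B M :=
  { N with smul_mem' := fun b _ hm => h b _ hm }

theorem isCompl_ofSMulMem_iff {N N' : Submodule A M} (h : ∀ (b : B), ∀ m ∈ N, b • m ∈ N)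
    (h' : ∀ (b : B), ∀ m ∈ N', b • m ∈ N') :
    IsCompl (N.ofSMulMem h) (N'.ofSMulMem h') ↔ IsCompl N N' := by
  rw [← isCompl_restrictScalars_iff ℤ, ← isCompl_restrictScalars_iff ℤ (s := N)]
  -- both sides are statements about the same two `ℤ`-submodules
  rfl

end Submodule

theorem order_restriction_iso_and_splitting_general
    {𝒦 : Type*} [CommRing 𝒦] [IsDomain 𝒦]
    {𝔄 : Type*} [Ring 𝔄] [Algebra 𝒦 𝔄]
    {𝔅 : Type*} [Ring 𝔅] [Algebra 𝒦 𝔅]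
    (i : 𝔄 →ₐ[𝒦] 𝔅) (j : 𝔅 →ₐ[𝒦] (FractionRing 𝒦 ⊗[𝒦] 𝔄))
    (hj : Function.Injective j)
    (hij : j.comp i = Algebra.TensorProduct.includeRight)
    (M M' : Type*)
    [AddCommGroup M] [Module 𝔅 M] [Module 𝒦 M] [IsScalarTower 𝒦 𝔅 M]
    [NoZeroSMulDivisors 𝒦 M]
    [AddCommGroup M'] [Module 𝔅 M'] [Module 𝒦 M'] [IsScalarTower 𝒦 𝔅 M']
    [NoZeroSMulDivisors 𝒦 M'] :
    letI : Module 𝔄 M := Module.compHom M i.toRingHom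
    letI : Module 𝔄 M' := Module.compHom M' i.toRingHom
    (Nonempty (M ≃ₗ[𝔅] M') ↔ Nonempty (M ≃ₗ[𝔄] M')) ∧
      (∀ N₁ N₂ : Submodule 𝔄 M, IsCompl N₁ N₂ →
        ∃ M₁ M₂ : Submodule 𝔅 M, IsCompl M₁ M₂ ∧
          (letI : Module 𝔄 M₁ := Module.compHom M₁ i.toRingHom;
            Nonempty (M₁ ≃ₗ[𝔄] N₁)) ∧
          (letI : Module 𝔄 M₂ := Module.compHom M₂ i.toRingHom;
            Nonempty (M₂ ≃ₗ[𝔄] N₂))) := by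
  let : Module 𝔄 M := Module.compHom M i.toRingHom
  let : Module 𝔄 M' := Module.compHom M' i.toRingHom
  have hden : ∀ b : 𝔅, ∃ s ∈ 𝒦⁰, ∃ a, s • b = i a :=
    exists_mem_smul_eq_of_map_eq_one_tmul 𝒦⁰ i j.toLinearMap hj (AlgHom.congr_fun hij)
  refine ⟨⟨fun ⟨e⟩ => ⟨e.toAddEquiv.toLinearEquiv fun a => e.map_smul (i a)⟩,
    fun ⟨e⟩ => ⟨e.toAddEquiv.toLinearEquiv
      (e.toLinearMap.map_smul_of_exists_smul_eq hden (fun _ _ => rfl) (fun _ _ => rfl))⟩⟩,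
    fun N₁ N₂ hN => ?_⟩
  have h₁ := Submodule.smul_mem_of_isCompl hden (fun _ _ => rfl) hN
  have h₂ := Submodule.smul_mem_of_isCompl hden (fun _ _ => rfl) hN.symm
  -- `N.ofSMulMem h` has the carrier of `N`, and its action of `𝔄` through `i` is that of `N`
  exact ⟨N₁.ofSMulMem h₁, N₂.ofSMulMem h₂, (Submodule.isCompl_ofSMulMem_iff h₁ h₂).mpr hN,
    ⟨LinearEquiv.refl 𝔄 N₁⟩, ⟨LinearEquiv.refl 𝔄 N₂⟩⟩

/-- **Isomorphism and splitting descend along an order.** With `𝒦` a Noetherian domain,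
`K` its fraction field, `𝔄` a finite torsion-free `𝒦`-algebra and `𝔅` an order in
`𝔄_K = K ⊗[𝒦] 𝔄` containing `𝔄`: two `𝔅`-modules `M, M'` (finite and torsion-free over `𝒦`)
are isomorphic over `𝔅` iff their restrictions to `𝔄` are isomorphic; and any direct sum
decomposition `M|_𝔄 = N₁ ⊕ N₂` into `𝔄`-submodules lifts to a decomposition `M = M₁ ⊕ M₂`
into `𝔅`-submodules with `M_i|_𝔄 ≅ N_i`. -/
theorem order_restriction_iso_and_splitting
    {𝒦 : Type*} [CommRing 𝒦] [IsDomain 𝒦] [IsNoetherianRing 𝒦]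
    {𝔄 : Type*} [Ring 𝔄] [Algebra 𝒦 𝔄] [Module.Finite 𝒦 𝔄] [NoZeroSMulDivisors 𝒦 𝔄]
    {𝔅 : Type*} [Ring 𝔅] [Algebra 𝒦 𝔅] [Module.Finite 𝒦 𝔅]
    (i : 𝔄 →ₐ[𝒦] 𝔅) (j : 𝔅 →ₐ[𝒦] (FractionRing 𝒦 ⊗[𝒦] 𝔄))
    (hj : Function.Injective j)
    (hij : j.comp i = Algebra.TensorProduct.includeRight)
    (hfull : Submodule.span (FractionRing 𝒦) (Set.range j) = ⊤)
    (M M' : Type*)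
    [AddCommGroup M] [Module 𝔅 M] [Module 𝒦 M] [IsScalarTower 𝒦 𝔅 M]
    [Module.Finite 𝒦 M] [NoZeroSMulDivisors 𝒦 M]
    [AddCommGroup M'] [Module 𝔅 M'] [Module 𝒦 M'] [IsScalarTower 𝒦 𝔅 M']
    [Module.Finite 𝒦 M'] [NoZeroSMulDivisors 𝒦 M'] :
    letI : Module 𝔄 M := Module.compHom M i.toRingHom
    letI : Module 𝔄 M' := Module.compHom M' i.toRingHom
    (Nonempty (M ≃ₗ[𝔅] M') ↔ Nonempty (M ≃ₗ[𝔄] M')) ∧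
      (∀ N₁ N₂ : Submodule 𝔄 M, IsCompl N₁ N₂ →
        ∃ M₁ M₂ : Submodule 𝔅 M, IsCompl M₁ M₂ ∧
          (letI : Module 𝔄 M₁ := Module.compHom M₁ i.toRingHom;
            Nonempty (M₁ ≃ₗ[𝔄] N₁)) ∧
          (letI : Module 𝔄 M₂ := Module.compHom M₂ i.toRingHom;
            Nonempty (M₂ ≃ₗ[𝔄] N₂))) :=
  order_restriction_iso_and_splitting_general i j hj hij M M'
end

section
/- Let R be a discrete valuation ring with uniformizer π and residue field F = R/πR, and let E be an R-algebra that is finitely generated and free as an R-module. If E/πE is a semisimple ring, then the Jacobson radical of E equals πE. -/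
open scoped TensorProduct

/-- The Jacobson radical of a semisimple ring is zero. -/
lemma aux_jacobson_bot_of_isSemisimpleRing (T : Type*) [Ring T] [IsSemisimpleRing T] :
    Ideal.jacobson (⊥ : Ideal T) = ⊥ := by
  obtain ⟨C, hC⟩ := exists_isCompl (Ideal.jacobson (⊥ : Ideal T))
  rcases eq_or_ne C ⊤ with h | h
  · have h1 : Ideal.jacobson (⊥ : Ideal T) ⊓ C = ⊥ := hC.inf_eq_bot
    rw [h, inf_top_eq] at h1
    exact h1
  · obtain ⟨M, hM, hCM⟩ := Ideal.exists_le_maximal C h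
    have h1 : Ideal.jacobson (⊥ : Ideal T) ≤ M := sInf_le ⟨bot_le, hM⟩
    have h2 : (⊤ : Ideal T) ≤ M := by
      rw [← hC.sup_eq_top]
      exact sup_le h1 hCM
    exact absurd (top_le_iff.mp h2) hM.ne_top

/-- Let `R` be a DVR with uniformizer `π` and `E` an `R`-algebra, finitely generated and
free as an `R`-module.  If `E/πE` (realized as `(R/πR) ⊗[R] E`) is a semisimple ring, then
the Jacobson radical of `E` equals `πE`. -/
theorem jacobson_eq_span_uniformizer
    {R : Type*} [CommRing R] [IsDomain R] [IsDiscreteValuationRing R]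
    (π : R) (hπ : Irreducible π)
    (E : Type*) [Ring E] [Algebra R E] [Module.Finite R E] [Module.Free R E]
    (hss : IsSemisimpleRing ((R ⧸ Ideal.span {π}) ⊗[R] E)) :
    (⊥ : Ideal E).jacobson = Ideal.span {algebraMap R E π} := by
  set J : Ideal R := Ideal.span {π} with hJ
  set p : E := algebraMap R E π with hp
  -- `π` is in the Jacobson radical of `R` since `R` is local and `π` is not a unit
  have hπjacR : J ≤ Ideal.jacobson (⊥ : Ideal R) := by
    rw [IsLocalRing.jacobson_eq_maximalIdeal (⊥ : Ideal R) bot_ne_top]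
    rw [hJ, Ideal.span_le, Set.singleton_subset_iff]
    exact IsLocalRing.mem_maximalIdeal π |>.mpr hπ.not_isUnit
  -- the submodule `J • ⊤` of `E` coincides with the ideal `span {p}`
  have hJtop : (J • ⊤ : Submodule R E) = (Ideal.span {p}).restrictScalars R := by
    apply le_antisymm
    · refine Submodule.smul_le.mpr fun r hr n _ => ?_
      rw [hJ, Ideal.mem_span_singleton] at hr
      obtain ⟨c, rfl⟩ := hr
      have : (π * c) • n = (algebraMap R E c * n) * p := by
        rw [Algebra.smul_def, map_mul, ← Algebra.commutes π, mul_assoc]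
      rw [Submodule.restrictScalars_mem, this]
      exact Ideal.mul_mem_left _ _ (Ideal.subset_span rfl)
    · intro x hx
      rw [Submodule.restrictScalars_mem] at hx
      obtain ⟨a, rfl⟩ := Submodule.mem_span_singleton.mp hx
      have : a • p = π • a := by
        rw [smul_eq_mul, hp, ← Algebra.commutes π a, ← Algebra.smul_def]
      rw [this]
      exact Submodule.smul_mem_smul (Ideal.subset_span rfl) trivial
  -- Step 1 : `p ∈ jacobson ⊥`.
  have hstep1 : p ∈ Ideal.jacobson (⊥ : Ideal E) := by
    rw [Ideal.mem_jacobson_iff]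
    intro y
    set u : E := y * p + 1 with hu
    -- right multiplication by `u` is surjective by Nakayama
    have hsurj : (⊤ : Submodule R E) ≤ LinearMap.range (LinearMap.mulRight R u) ⊔ J • ⊤ := by
      intro e _
      have h1 : e * u = π • (e * y) + e := by
        rw [hu, mul_add, mul_one, ← mul_assoc, Algebra.smul_def, Algebra.commutes π (e * y)]
      have he : e = (e * u) - π • (e * y) := by rw [h1]; abel
      rw [he]
      refine Submodule.sub_mem _ (Submodule.mem_sup_left ⟨e, rfl⟩)
        (Submodule.mem_sup_right ?_)
      exact Submodule.smul_mem_smul (Ideal.subset_span rfl) trivial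
    have htop : (⊤ : Submodule R E) ≤ LinearMap.range (LinearMap.mulRight R u) :=
      Submodule.le_of_le_smul_of_le_jacobson_bot Module.Finite.fg_top hπjacR hsurj
    obtain ⟨z, hz⟩ := htop (Submodule.mem_top (x := (1 : E)))
    refine ⟨z, ?_⟩
    have hz' : z * u = 1 := hz
    rw [Ideal.mem_bot]
    have : z * y * p + z - 1 = z * u - 1 := by rw [hu, mul_add, mul_one, ← mul_assoc]
    rw [this, hz', sub_self]
  -- Step 2 : `jacobson ⊥ ≤ span {p}` via the semisimple quotient.
  have hstep2 : Ideal.jacobson (⊥ : Ideal E) ≤ Ideal.span {p} := by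
    set f : E →+* (R ⧸ J) ⊗[R] E :=
      (Algebra.TensorProduct.includeRight : E →ₐ[R] (R ⧸ J) ⊗[R] E).toRingHom with hf
    have hfsurj : Function.Surjective f := by
      intro t
      induction t using TensorProduct.induction_on with
      | zero => exact ⟨0, map_zero f⟩
      | tmul x e =>
        obtain ⟨r, rfl⟩ := Ideal.Quotient.mk_surjective x
        refine ⟨r • e, ?_⟩
        show (1 : R ⧸ J) ⊗ₜ[R] (r • e) = _
        rw [← TensorProduct.smul_tmul]
        congr 1
        rw [← Algebra.algebraMap_eq_smul_one]
        rfl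
      | add a b ha hb =>
        obtain ⟨x, rfl⟩ := ha
        obtain ⟨y, rfl⟩ := hb
        exact ⟨x + y, map_add f x y⟩
    have hker : RingHom.ker f = Ideal.span {p} := by
      ext e
      have h1 : f e = (1 : R ⧸ J) ⊗ₜ[R] e := rfl
      rw [RingHom.mem_ker, h1]
      constructor
      · intro h
        have h2 := congrArg (TensorProduct.quotTensorEquivQuotSMul E J) h
        rw [map_zero] at h2
        have h3 : (TensorProduct.quotTensorEquivQuotSMul E J) ((1 : R ⧸ J) ⊗ₜ[R] e)
            = Submodule.Quotient.mk e := by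
          have := TensorProduct.quotTensorEquivQuotSMul_mk_tmul (M := E) J 1 e
          rw [map_one, one_smul] at this
          exact this
        rw [h3] at h2
        have h4 : e ∈ (J • ⊤ : Submodule R E) := (Submodule.Quotient.mk_eq_zero _).mp h2
        rw [hJtop, Submodule.restrictScalars_mem] at h4
        exact h4
      · intro h
        have h4 : e ∈ (J • ⊤ : Submodule R E) := by
          rw [hJtop, Submodule.restrictScalars_mem]; exact h
        have h2 : Submodule.Quotient.mk (p := (J • ⊤ : Submodule R E)) e = 0 :=
          (Submodule.Quotient.mk_eq_zero _).mpr h4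
        have h3 : (TensorProduct.quotTensorEquivQuotSMul E J) ((1 : R ⧸ J) ⊗ₜ[R] e)
            = Submodule.Quotient.mk e := by
          have := TensorProduct.quotTensorEquivQuotSMul_mk_tmul (M := E) J 1 e
          rw [map_one, one_smul] at this
          exact this
        have := h3.trans h2
        exact (map_eq_zero_iff _ (TensorProduct.quotTensorEquivQuotSMul E J).injective).mp this
    have hcomap := Ideal.comap_jacobson_of_surjective hfsurj
      (K := (⊥ : Ideal ((R ⧸ J) ⊗[R] E)))
    rw [aux_jacobson_bot_of_isSemisimpleRing] at hcomap
    rw [← RingHom.ker_eq_comap_bot, hker] at hcomap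
    -- hcomap : span {p} = (span {p}).jacobson
    calc Ideal.jacobson (⊥ : Ideal E) ≤ Ideal.jacobson (Ideal.span {p}) :=
          Ideal.jacobson_mono bot_le
      _ = Ideal.span {p} := by rw [← hcomap]
  refine le_antisymm hstep2 ?_
  rw [Ideal.span_le, Set.singleton_subset_iff]
  exact hstep1
end

section
/- Let R be a discrete valuation ring with uniformizer π, E a finite free R-algebra with E/πE split semisimple, P and P' projective indecomposable E-modules which are projective covers of non-isomorphic simple E-modules L and L' respectively. Then Hom_E(P, P') = 0. Moreover End_E(P) ≅ R (scalars). -/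
open scoped TensorProduct

section Mat
variable {m : Type*} [Fintype m] [DecidableEq m] {α : Type*} [CommRing α]
open Matrix

private lemma matOne : ∑ j : m, Matrix.single j j (1:α) = 1 := by
  ext r c
  simp [Matrix.sum_apply, Matrix.single, Matrix.one_apply, Matrix.of_apply, ite_and,
    Finset.sum_ite_eq]

private lemma matL (z a : m) (N : Matrix m m α) :
    Matrix.single z a (1:α) * N = ∑ c, N a c • Matrix.single z c 1 := by
  ext r c'
  simp [Matrix.mul_apply, Matrix.sum_apply, Matrix.single, Matrix.of_apply, ite_and,
    Finset.sum_ite_eq, Finset.sum_ite_eq']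

private lemma matR (z c : m) (N : Matrix m m α) :
    N * Matrix.single c z (1:α) = ∑ a, N a c • Matrix.single a z 1 := by
  ext r c'
  simp [Matrix.mul_apply, Matrix.sum_apply, Matrix.single, Matrix.of_apply, ite_and,
    Finset.sum_ite_eq, Finset.sum_ite_eq']

private lemma matD (j : m) (N : Matrix m m α) :
    Matrix.single j j (1:α) * N * Matrix.single j j 1 = N j j • Matrix.single j j 1 := by
  ext r c'
  simp [Matrix.mul_apply, Matrix.sum_apply, Matrix.single, Matrix.of_apply, ite_and,
    Finset.sum_ite_eq, Finset.sum_ite_eq', Matrix.smul_apply]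
  by_cases h1 : j = r <;> by_cases h2 : j = c' <;> simp [h1, h2, mul_comm]
end Mat

section Pi
variable {n : Type*} [DecidableEq n] {f : n → Type*} [∀ i, NonUnitalNonAssocRing (f i)]

private lemma piMulL (i : n) (X : f i) (b : ∀ i, f i) :
    Pi.single i X * b = Pi.single i (X * b i) := by
  funext j
  by_cases h : j = i
  · subst h; simp [Pi.mul_apply]
  · simp [Pi.mul_apply, Pi.single_apply, h]

private lemma piMulR (i : n) (X : f i) (b : ∀ i, f i) :
    b * Pi.single i X = Pi.single i (b i * X) := by
  funext j
  by_cases h : j = i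
  · subst h; simp [Pi.mul_apply]
  · simp [Pi.mul_apply, Pi.single_apply, h]

private lemma piSum {β : Type*} (s : Finset β) (i : n) (F : β → f i) :
    ∑ a ∈ s, Pi.single i (F a) = Pi.single i (∑ a ∈ s, F a) :=
  (map_sum (AddMonoidHom.single f i) F s).symm
end Pi

section Aux
variable {R : Type*} [CommRing R] {π : R}
variable {E : Type*} [Ring E] [Algebra R E]
variable {M : Type*} [AddCommGroup M] [Module E M]

set_option maxHeartbeats 1000000 in
private theorem split_aux (hmax : (Ideal.span {π}).IsMaximal)
    {n : ℕ} {d : Fin n → ℕ}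
    (ψ : ((R ⧸ Ideal.span {π}) ⊗[R] E) ≃ₐ[R ⧸ Ideal.span {π}]
        ((i : Fin n) → Matrix (Fin (d i)) (Fin (d i)) (R ⧸ Ideal.span {π})))
    (hM : ∀ m : M, algebraMap R E π • m = 0) :
    (∀ S : Submodule E M, ∃ C, IsCompl S C) ∧
    ((∀ S : Submodule E M, S = ⊥ ∨ S = ⊤) →
      ∀ η : M →ₗ[E] M, ∃ r : R, ∀ m, η m = algebraMap R E r • m) := by
  set k := R ⧸ Ideal.span {π} with hk
  letI : Module R M := Module.compHom M (algebraMap R E)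
  have hsm : ∀ (r : R) (m : M), r • m = algebraMap R E r • m := fun r m => rfl
  have hT : Module.IsTorsionBySet R M (Ideal.span {π} : Set R) := by
    intro m r
    obtain ⟨c, hc⟩ := Ideal.mem_span_singleton'.mp r.2
    show (r : R) • m = 0
    rw [hsm, ← hc, map_mul, mul_smul, hM, smul_zero]
  letI : Module k M := hT.module
  have hkm : ∀ (r : R) (m : M), (Ideal.Quotient.mk (Ideal.span {π}) r) • m = algebraMap R E r • m :=
    fun r m => hT.mk_smul r m
  letI : Algebra R (Module.End k M) :=
    RingHom.toAlgebra' ((algebraMap k (Module.End k M)).comp (algebraMap R k))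
      (fun r x => by simpa using (Algebra.commutes (algebraMap R k r) x))
  letI : @IsScalarTower R k (Module.End k M) Algebra.toSMul Algebra.toSMul Algebra.toSMul :=
    IsScalarTower.of_algebraMap_eq' rfl
  let g : E →ₐ[R] Module.End k M :=
    { toFun := fun x =>
        { toFun := fun m => x • m
          map_add' := smul_add x
          map_smul' := by
            intro c m
            obtain ⟨r, rfl⟩ := Ideal.Quotient.mk_surjective c
            show x • ((Ideal.Quotient.mk _ r) • m) = (Ideal.Quotient.mk _ r) • (x • m)
            rw [hkm, hkm, ← mul_smul, ← Algebra.commutes r x, mul_smul] }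
      map_one' := by ext m; exact one_smul E m
      map_mul' := fun x y => by ext m; exact mul_smul x y m
      map_zero' := by ext m; exact zero_smul E m
      map_add' := fun x y => by ext m; exact add_smul x y m
      commutes' := by
        intro r; ext m
        show algebraMap R E r • m = ((algebraMap k (Module.End k M)) (algebraMap R k r)) m
        rw [Module.algebraMap_end_apply, Ideal.Quotient.algebraMap_eq, hkm] }
  have hgapp : ∀ (x : E) (m : M), g x m = x • m := fun x m => rfl
  let Φ : (k ⊗[R] E) →ₐ[k] Module.End k M :=
    Algebra.TensorProduct.lift (Algebra.ofId k _) g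
      (fun c x => by simp only [Algebra.ofId_apply]; exact Algebra.commutes c (g x))
  letI : Module (k ⊗[R] E) M := Module.compHom M Φ.toRingHom
  have hA : ∀ (a : k ⊗[R] E) (m : M), a • m = Φ a m := fun a m => rfl
  have hE : ∀ (x : E) (m : M), ((1 : k) ⊗ₜ[R] x) • m = x • m := by
    intro x m
    rw [hA]
    show Φ ((1 : k) ⊗ₜ[R] x) m = x • m
    rw [Algebra.TensorProduct.lift_tmul]
    simp [hgapp]
  have hks : ∀ (c : k) (a : k ⊗[R] E) (m : M), (c • a) • m = c • (a • m) := by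
    intro c a m
    rw [hA, hA, map_smul]
    rfl
  have hkc : ∀ (c : k) (m : M), (algebraMap k (k ⊗[R] E) c) • m = c • m := by
    intro c m
    rw [hA, AlgHom.commutes]
    rw [Module.algebraMap_end_apply]
  have hca : ∀ (a : k ⊗[R] E) (c : k) (m : M), a • (c • m) = c • (a • m) := by
    intro a c m
    rw [← hkc, ← mul_smul, ← Algebra.commutes c a, mul_smul, hkc]
  have hSA : ∀ (S : Submodule E M) (a : k ⊗[R] E), ∀ m ∈ S, a • m ∈ S := by
    intro S a
    induction a using TensorProduct.induction_on with
    | zero => intro m hm; rw [hA, map_zero]; exact S.zero_mem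
    | tmul c x =>
        intro m hm
        obtain ⟨r, rfl⟩ := Ideal.Quotient.mk_surjective c
        have : (Ideal.Quotient.mk (Ideal.span {π}) r ⊗ₜ[R] x) • m
            = algebraMap R E r • (x • m) := by
          have h1 : (Ideal.Quotient.mk (Ideal.span {π}) r ⊗ₜ[R] x : k ⊗[R] E)
              = (Ideal.Quotient.mk (Ideal.span {π}) r) • (1 ⊗ₜ[R] x) := by
            rw [TensorProduct.smul_tmul', smul_eq_mul, mul_one]
          rw [h1, hks, hE, hkm]
        rw [this]
        exact S.smul_mem _ (S.smul_mem _ hm)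
    | add a b ha hb =>
        intro m hm
        have : (a + b) • m = a • m + b • m := by rw [hA, map_add]; rfl
        rw [this]
        exact S.add_mem (ha m hm) (hb m hm)
  -- the standard basis elements
  set B := (i : Fin n) → Matrix (Fin (d i)) (Fin (d i)) k with hB
  let z : ∀ i : Fin n, Fin (d i) → Fin (d i) :=
    fun i a => ⟨0, Nat.lt_of_le_of_lt (Nat.zero_le _) a.isLt⟩
  let eu : ∀ i : Fin n, Fin (d i) → B :=
    fun i a => Pi.single i (Matrix.single a (z i a) 1)
  let ev : ∀ i : Fin n, Fin (d i) → B :=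
    fun i a => Pi.single i (Matrix.single (z i a) a 1)
  let ee : ∀ i : Fin n, Fin (d i) → B :=
    fun i a => Pi.single i (Matrix.single a a 1)
  have hzz : ∀ (i : Fin n) (a b : Fin (d i)), z i a = z i b := fun i a b => rfl
  have heuv : ∀ (i : Fin n) (a : Fin (d i)), eu i a * ev i a = ee i a := by
    intro i a
    show Pi.single i _ * Pi.single i _ = _
    rw [piMulL]
    simp only [Pi.single_eq_same]
    rw [Matrix.single_mul_single_same, one_mul]
  have hee1 : ∑ i : Fin n, ∑ a : Fin (d i), ee i a = 1 := by
    have : ∀ i : Fin n, ∑ a : Fin (d i), ee i a = Pi.single i (1 : Matrix (Fin (d i)) (Fin (d i)) k) := by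
      intro i
      rw [piSum]
      rw [matOne]
    simp only [this]
    exact Finset.univ_sum_single (1 : B)
  have hevb : ∀ (b : B) (i : Fin n) (a : Fin (d i)),
      ev i a * b = ∑ c : Fin (d i), (b i a c) • ev i c := by
    intro b i a
    show Pi.single i _ * b = _
    rw [piMulL, matL]
    rw [← piSum]
    congr 1
    funext c
    rw [Pi.single_smul]
  have hbeu : ∀ (b : B) (i : Fin n) (c : Fin (d i)),
      b * eu i c = ∑ a : Fin (d i), (b i a c) • eu i a := by
    intro b i c
    show b * Pi.single i _ = _
    rw [piMulR, matR]
    rw [← piSum]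
    congr 1
    funext a
    rw [Pi.single_smul]
  have hebe : ∀ (b : B) (i : Fin n) (a : Fin (d i)),
      ee i a * b * ee i a = (b i a a) • ee i a := by
    intro b i a
    show Pi.single i _ * b * Pi.single i _ = _
    rw [piMulL, piMulL]
    simp only [Pi.single_eq_same]
    rw [matD]
    rw [Pi.single_smul]
  -- transport the basis elements through ψ
  let u : ∀ i : Fin n, Fin (d i) → k ⊗[R] E := fun i a => ψ.symm (eu i a)
  let v : ∀ i : Fin n, Fin (d i) → k ⊗[R] E := fun i a => ψ.symm (ev i a)
  let w : ∀ i : Fin n, Fin (d i) → k ⊗[R] E := fun i a => ψ.symm (ee i a)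
  have huv : ∀ (i : Fin n) (a : Fin (d i)), u i a * v i a = w i a := by
    intro i a
    show ψ.symm _ * ψ.symm _ = ψ.symm _
    rw [← map_mul, heuv]
  have hw1 : ∑ i : Fin n, ∑ a : Fin (d i), w i a = 1 := by
    have : ∑ i : Fin n, ∑ a : Fin (d i), w i a
        = ψ.symm (∑ i : Fin n, ∑ a : Fin (d i), ee i a) := by
      rw [map_sum]
      refine Finset.sum_congr rfl fun i _ => ?_
      rw [map_sum]
    rw [this, hee1, map_one]
  have hva : ∀ (a₀ : k ⊗[R] E) (i : Fin n) (a : Fin (d i)),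
      v i a * a₀ = ∑ c : Fin (d i), ((ψ a₀) i a c) • v i c := by
    intro a₀ i a
    have h1 : v i a * a₀ = ψ.symm (ev i a * ψ a₀) := by
      rw [map_mul, AlgEquiv.symm_apply_apply]
    rw [h1, hevb, map_sum]
    refine Finset.sum_congr rfl fun c _ => ?_
    rw [map_smul]
  have hau : ∀ (a₀ : k ⊗[R] E) (i : Fin n) (c : Fin (d i)),
      a₀ * u i c = ∑ a : Fin (d i), ((ψ a₀) i a c) • u i a := by
    intro a₀ i c
    have h1 : a₀ * u i c = ψ.symm (ψ a₀ * eu i c) := by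
      rw [map_mul, AlgEquiv.symm_apply_apply]
    rw [h1, hbeu, map_sum]
    refine Finset.sum_congr rfl fun a _ => ?_
    rw [map_smul]
  have hwaw : ∀ (a₀ : k ⊗[R] E) (i : Fin n) (a : Fin (d i)),
      w i a * a₀ * w i a = ((ψ a₀) i a a) • w i a := by
    intro a₀ i a
    have h1 : w i a * a₀ * w i a = ψ.symm (ee i a * ψ a₀ * ee i a) := by
      rw [map_mul, map_mul, AlgEquiv.symm_apply_apply]
    rw [h1, hebe, map_smul]
  constructor
  · -- complements
    intro S
    let Sk : Submodule k M :=
      { carrier := S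
        add_mem' := fun h1 h2 => S.add_mem h1 h2
        zero_mem' := S.zero_mem
        smul_mem' := by
          intro c m hm
          obtain ⟨r, rfl⟩ := Ideal.Quotient.mk_surjective c
          show (Ideal.Quotient.mk (Ideal.span {π}) r) • m ∈ S
          rw [hkm]
          exact S.smul_mem _ hm }
    have hmemSk : ∀ m : M, m ∈ Sk ↔ m ∈ S := fun m => Iff.rfl
    haveI := hmax
    letI : Field k := Ideal.Quotient.field _
    obtain ⟨Tk, hTk⟩ := Submodule.exists_isCompl Sk
    let p : M →ₗ[k] Sk := Sk.linearProjOfIsCompl Tk hTk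
    let q : M → M := fun m0 => ∑ i : Fin n, ∑ a : Fin (d i), u i a • ((p (v i a • m0) : Sk) : M)
    have qAdd : ∀ m1 m2, q (m1 + m2) = q m1 + q m2 := by
      intro m1 m2
      show (∑ i : Fin n, ∑ a : Fin (d i), _) = _
      rw [← Finset.sum_add_distrib]
      refine Finset.sum_congr rfl fun i _ => ?_
      rw [← Finset.sum_add_distrib]
      refine Finset.sum_congr rfl fun a _ => ?_
      rw [smul_add, map_add, Submodule.coe_add, smul_add]
    have qZero : q 0 = 0 := by
      show (∑ i : Fin n, ∑ a : Fin (d i), _) = (0 : M)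
      refine Finset.sum_eq_zero fun i _ => Finset.sum_eq_zero fun a _ => ?_
      rw [smul_zero, map_zero, Submodule.coe_zero, smul_zero]
    have qSub : ∀ m1 m2, q (m1 - m2) = q m1 - q m2 := by
      intro m1 m2
      have := qAdd (m1 - m2) m2
      rw [sub_add_cancel] at this
      rw [this]
      abel
    have qS : ∀ m0, q m0 ∈ S := by
      intro m0
      refine Submodule.sum_mem S fun i _ => Submodule.sum_mem S fun a _ => ?_
      exact hSA S _ _ (p (v i a • m0)).2
    have qFix : ∀ m0 ∈ S, q m0 = m0 := by
      intro m0 hm0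
      have h1 : ∀ (i : Fin n) (a : Fin (d i)), ((p (v i a • m0) : Sk) : M) = v i a • m0 := by
        intro i a
        have hmem : v i a • m0 ∈ Sk := hSA S _ _ hm0
        have h2 := Submodule.linearProjOfIsCompl_apply_left hTk ⟨v i a • m0, hmem⟩
        have h3 : p (v i a • m0) = ⟨v i a • m0, hmem⟩ := h2
        rw [h3]
      show (∑ i : Fin n, ∑ a : Fin (d i), u i a • ((p (v i a • m0) : Sk) : M)) = m0
      calc (∑ i : Fin n, ∑ a : Fin (d i), u i a • ((p (v i a • m0) : Sk) : M))
          = ∑ i : Fin n, ∑ a : Fin (d i), (u i a * v i a) • m0 := by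
            refine Finset.sum_congr rfl fun i _ => Finset.sum_congr rfl fun a _ => ?_
            rw [h1, mul_smul]
        _ = (∑ i : Fin n, ∑ a : Fin (d i), u i a * v i a) • m0 := by
            rw [Finset.sum_smul]
            refine Finset.sum_congr rfl fun i _ => ?_
            rw [Finset.sum_smul]
        _ = m0 := by
            simp only [huv]
            rw [hw1, one_smul]
    have qA : ∀ (a₀ : k ⊗[R] E) (m0 : M), q (a₀ • m0) = a₀ • q m0 := by
      intro a₀ m0
      show (∑ i : Fin n, ∑ a : Fin (d i), u i a • ((p (v i a • a₀ • m0) : Sk) : M)) = _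
      have lhs : ∀ (i : Fin n) (a : Fin (d i)),
          u i a • ((p (v i a • a₀ • m0) : Sk) : M)
          = ∑ c : Fin (d i), ((ψ a₀) i a c) • (u i a • ((p (v i c • m0) : Sk) : M)) := by
        intro i a
        have h1 : v i a • a₀ • m0 = ∑ c : Fin (d i), ((ψ a₀) i a c) • (v i c • m0) := by
          rw [← mul_smul, hva, Finset.sum_smul]
          refine Finset.sum_congr rfl fun c _ => ?_
          rw [hks]
        rw [h1]
        have h2 : p (∑ c : Fin (d i), ((ψ a₀) i a c) • (v i c • m0))
            = ∑ c : Fin (d i), ((ψ a₀) i a c) • p (v i c • m0) := by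
          rw [map_sum]
          exact Finset.sum_congr rfl fun c _ => map_smul p _ _
        rw [h2]
        have h3 : ((∑ c : Fin (d i), ((ψ a₀) i a c) • p (v i c • m0) : Sk) : M)
            = ∑ c : Fin (d i), ((ψ a₀) i a c) • ((p (v i c • m0) : Sk) : M) := by
          rw [Submodule.coe_sum]
          exact Finset.sum_congr rfl fun c _ => rfl
        rw [h3, Finset.smul_sum]
        exact Finset.sum_congr rfl fun c _ => hca _ _ _
      have rhs : ∀ (i : Fin n) (c : Fin (d i)),
          a₀ • (u i c • ((p (v i c • m0) : Sk) : M))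
          = ∑ a : Fin (d i), ((ψ a₀) i a c) • (u i a • ((p (v i c • m0) : Sk) : M)) := by
        intro i c
        rw [← mul_smul, hau, Finset.sum_smul]
        refine Finset.sum_congr rfl fun a _ => ?_
        rw [hks]
      calc (∑ i : Fin n, ∑ a : Fin (d i), u i a • ((p (v i a • a₀ • m0) : Sk) : M))
          = ∑ i : Fin n, ∑ a : Fin (d i), ∑ c : Fin (d i),
              ((ψ a₀) i a c) • (u i a • ((p (v i c • m0) : Sk) : M)) := by
            exact Finset.sum_congr rfl fun i _ => Finset.sum_congr rfl fun a _ => lhs i a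
        _ = ∑ i : Fin n, ∑ c : Fin (d i), ∑ a : Fin (d i),
              ((ψ a₀) i a c) • (u i a • ((p (v i c • m0) : Sk) : M)) := by
            exact Finset.sum_congr rfl fun i _ => Finset.sum_comm
        _ = ∑ i : Fin n, ∑ c : Fin (d i), a₀ • (u i c • ((p (v i c • m0) : Sk) : M)) := by
            exact Finset.sum_congr rfl fun i _ => Finset.sum_congr rfl fun c _ => (rhs i c).symm
        _ = a₀ • q m0 := by
            show _ = a₀ • ∑ i : Fin n, ∑ a : Fin (d i), u i a • ((p (v i a • m0) : Sk) : M)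
            rw [Finset.smul_sum]
            exact Finset.sum_congr rfl fun i _ => (Finset.smul_sum).symm
    have qE : ∀ (x : E) (m0 : M), q (x • m0) = x • q m0 := by
      intro x m0
      rw [← hE x m0, qA, hE]
    let C : Submodule E M :=
      { carrier := {m0 | q m0 = 0}
        add_mem' := by
          intro m1 m2 hm1 hm2
          show q (m1 + m2) = 0
          rw [qAdd, hm1, hm2, add_zero]
        zero_mem' := qZero
        smul_mem' := by
          intro x m0 hm0
          show q (x • m0) = 0
          rw [qE, hm0, smul_zero] }
    have hmemC : ∀ m0 : M, m0 ∈ C ↔ q m0 = 0 := fun m0 => Iff.rfl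
    refine ⟨C, ?_, ?_⟩
    · rw [disjoint_iff]
      ext m0
      simp only [Submodule.mem_inf, Submodule.mem_bot]
      constructor
      · rintro ⟨hmS, hmC⟩
        have := qFix m0 hmS
        rw [(hmemC m0).mp hmC] at this
        exact this.symm
      · rintro rfl
        exact ⟨S.zero_mem, C.zero_mem⟩
    · rw [codisjoint_iff]
      rw [eq_top_iff]
      intro m0 _
      have h1 : m0 = q m0 + (m0 - q m0) := by abel
      have h2 : m0 - q m0 ∈ C := by
        rw [hmemC, qSub, qFix (q m0) (qS m0), sub_self]
      rw [h1]
      exact Submodule.add_mem _ (Submodule.mem_sup_left (qS m0))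
        (Submodule.mem_sup_right h2)
  · -- endomorphisms are scalars
    intro hsimple η
    by_cases htriv : Subsingleton M
    · exact ⟨0, fun m => Subsingleton.elim _ _⟩
    haveI := not_subsingleton_iff_nontrivial.mp htriv
    obtain ⟨m0, hm0⟩ := exists_ne (0 : M)
    have hηk : ∀ (c : k) (m : M), η (c • m) = c • η m := by
      intro c m
      obtain ⟨r, rfl⟩ := Ideal.Quotient.mk_surjective c
      rw [hkm, hkm]
      exact η.map_smul _ m
    have hηA : ∀ (a₀ : k ⊗[R] E) (m : M), η (a₀ • m) = a₀ • η m := by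
      intro a₀
      induction a₀ using TensorProduct.induction_on with
      | zero =>
          intro m
          have h0 : ∀ m1 : M, (0 : k ⊗[R] E) • m1 = 0 := fun m1 => by
            rw [hA, map_zero]; rfl
          rw [h0, h0, η.map_zero]
      | tmul c x =>
          intro m
          have h1 : ∀ m1 : M, (c ⊗ₜ[R] x : k ⊗[R] E) • m1 = c • (x • m1) := by
            intro m1
            have : (c ⊗ₜ[R] x : k ⊗[R] E) = c • ((1 : k) ⊗ₜ[R] x) := by
              rw [TensorProduct.smul_tmul', smul_eq_mul, mul_one]
            rw [this, hks, hE]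
          rw [h1, h1, hηk, η.map_smul]
      | add a b ha hb =>
          intro m
          have h2 : ∀ m1 : M, (a + b) • m1 = a • m1 + b • m1 := fun m1 => by
            rw [hA, map_add]; rfl
          rw [h2, h2, η.map_add, ha, hb]
    -- find a nonzero piece
    have hsum : (∑ i : Fin n, ∑ a : Fin (d i), w i a • m0) = m0 := by
      calc (∑ i : Fin n, ∑ a : Fin (d i), w i a • m0)
          = (∑ i : Fin n, ∑ a : Fin (d i), w i a) • m0 := by
            rw [Finset.sum_smul]
            exact Finset.sum_congr rfl fun i _ => (Finset.sum_smul).symm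
        _ = m0 := by rw [hw1, one_smul]
    have hex : ∃ (i : Fin n) (a : Fin (d i)), w i a • m0 ≠ 0 := by
      by_contra hc
      push_neg at hc
      apply hm0
      rw [← hsum]
      refine Finset.sum_eq_zero fun i _ => Finset.sum_eq_zero fun a _ => hc i a
    obtain ⟨i, a, hv0⟩ := hex
    set v0 : M := w i a • m0 with hv0def
    have hwv0 : w i a • v0 = v0 := by
      rw [hv0def, ← mul_smul]
      have : w i a * w i a = w i a := by
        show ψ.symm _ * ψ.symm _ = ψ.symm _
        rw [← map_mul]
        congr 1
        show Pi.single i _ * Pi.single i _ = _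
        rw [piMulL]
        simp only [Pi.single_eq_same]
        rw [Matrix.single_mul_single_same, one_mul]
      rw [this]
    -- the A-orbit of v0 is an E-submodule
    let T : Submodule E M :=
      { carrier := Set.range (fun a₀ : k ⊗[R] E => a₀ • v0)
        add_mem' := by
          rintro m1 m2 ⟨a1, rfl⟩ ⟨a2, rfl⟩
          refine ⟨a1 + a2, ?_⟩
          show (a1 + a2) • v0 = a1 • v0 + a2 • v0
          exact add_smul a1 a2 v0
        zero_mem' := by
          refine ⟨0, ?_⟩
          show (0 : k ⊗[R] E) • v0 = 0
          rw [hA, map_zero]; rfl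
        smul_mem' := by
          rintro x m1 ⟨a1, rfl⟩
          refine ⟨((1 : k) ⊗ₜ[R] x) * a1, ?_⟩
          show (((1 : k) ⊗ₜ[R] x) * a1) • v0 = x • (a1 • v0)
          rw [mul_smul, hE]
      }
    have hT : T = ⊤ := by
      rcases hsimple T with h | h
      · exfalso
        apply hv0
        have : v0 ∈ T := ⟨1, one_smul _ v0⟩
        rw [h] at this
        simpa using this
      · exact h
    have hmemT : ∀ m : M, ∃ a₀ : k ⊗[R] E, a₀ • v0 = m := by
      intro m
      have : m ∈ T := by rw [hT]; trivial
      exact this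
    obtain ⟨a₀, ha₀⟩ := hmemT (η v0)
    have hkey : η v0 = ((ψ a₀) i a a) • v0 := by
      calc η v0 = η (w i a • v0) := by rw [hwv0]
        _ = w i a • η v0 := hηA _ _
        _ = w i a • (a₀ • v0) := by rw [ha₀]
        _ = (w i a * a₀ * w i a) • v0 := by
            rw [mul_smul, mul_smul, hwv0]
        _ = ((ψ a₀) i a a) • v0 := by rw [hwaw, hks, hwv0]
    obtain ⟨r, hr⟩ := Ideal.Quotient.mk_surjective ((ψ a₀) i a a)
    refine ⟨r, fun m => ?_⟩
    obtain ⟨a₁, rfl⟩ := hmemT m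
    rw [← hkm r, hr]
    calc η (a₁ • v0) = a₁ • η v0 := hηA _ _
      _ = a₁ • (((ψ a₀) i a a) • v0) := by rw [hkey]
      _ = ((ψ a₀) i a a) • (a₁ • v0) := hca _ _ _

end Aux

section Support
variable {R : Type*} [CommRing R]
variable {E : Type*} [Ring E] [Algebra R E]

/-- scalar multiplication by `algebraMap R E π` as an `E`-linear endomorphism. -/
private def piSmulMap (π : R) (M : Type*) [AddCommGroup M] [Module E M] : M →ₗ[E] M where
  toFun m := algebraMap R E π • m
  map_add' := smul_add _
  map_smul' x m := by
    simp only [RingHom.id_apply]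
    rw [← mul_smul, Algebra.commutes π x, mul_smul]

private lemma piSmulMap_apply (π : R) {M : Type*} [AddCommGroup M] [Module E M] (m : M) :
    piSmulMap (E := E) π M m = algebraMap R E π • m := rfl

/-- a simple quotient with superfluous kernel makes the module cyclic. -/
private lemma cyclic_of_cover {P L : Type*} [AddCommGroup P] [Module E P]
    [AddCommGroup L] [Module E L] (hL : IsSimpleModule E L)
    (f : P →ₗ[E] L) (hf : Function.Surjective f)
    (hfsup : ∀ N : Submodule E P, N ⊔ LinearMap.ker f = ⊤ → N = ⊤) :
    ∃ x : P, Submodule.span E {x} = ⊤ := by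
  haveI := hL.nontrivial
  obtain ⟨l, hl⟩ := exists_ne (0 : L)
  obtain ⟨x, hx⟩ := hf l
  refine ⟨x, hfsup _ ?_⟩
  rw [Submodule.eq_top_iff']
  intro p
  have hspan : Submodule.span E {l} = ⊤ := by
    rcases hL.1.2 (Submodule.span E {l}) with h | h
    · exact absurd (Submodule.span_singleton_eq_bot.mp h) hl
    · exact h
  have : f p ∈ Submodule.span E {l} := by rw [hspan]; trivial
  obtain ⟨e, he⟩ := Submodule.mem_span_singleton.mp this
  have h1 : e • x ∈ Submodule.span E {x} := Submodule.smul_mem _ e (Submodule.mem_span_singleton_self x)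
  have h2 : p - e • x ∈ LinearMap.ker f := by
    rw [LinearMap.mem_ker, map_sub, map_smul, hx, he, sub_self]
  have : p = e • x + (p - e • x) := by abel
  rw [this]
  exact Submodule.add_mem _ (Submodule.mem_sup_left h1) (Submodule.mem_sup_right h2)

/-- every proper submodule is contained in the kernel of the cover map. -/
private lemma proper_le_ker {P L : Type*} [AddCommGroup P] [Module E P]
    [AddCommGroup L] [Module E L] (hL : IsSimpleModule E L)
    (f : P →ₗ[E] L)
    (hfsup : ∀ N : Submodule E P, N ⊔ LinearMap.ker f = ⊤ → N = ⊤)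
    (N : Submodule E P) (hN : N ≠ ⊤) : N ≤ LinearMap.ker f := by
  rcases hL.1.2 (Submodule.map f N) with h | h
  · intro p hp
    have : f p ∈ Submodule.map f N := Submodule.mem_map_of_mem hp
    rw [h, Submodule.mem_bot] at this
    exact this
  · exfalso
    apply hN
    apply hfsup
    rw [Submodule.eq_top_iff']
    intro p
    have : f p ∈ Submodule.map f N := by rw [h]; trivial
    obtain ⟨y, hy, hyp⟩ := this
    have h2 : p - y ∈ LinearMap.ker f := by rw [LinearMap.mem_ker, map_sub, hyp, sub_self]
    have : p = y + (p - y) := by abel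
    rw [this]
    exact Submodule.add_mem _ (Submodule.mem_sup_left hy) (Submodule.mem_sup_right h2)

private lemma finite_of_cyclic [Module.Finite R E] {M : Type*} [AddCommGroup M] [Module E M]
    [Module R M] [IsScalarTower R E M] (x : M) (hx : Submodule.span E {x} = ⊤) :
    Module.Finite R M := by
  let φ : E →ₗ[R] M :=
    { toFun := fun e => e • x
      map_add' := fun a b => add_smul a b x
      map_smul' := fun r e => by
        simp only [RingHom.id_apply]
        rw [smul_assoc] }
  apply Module.Finite.of_surjective φ
  intro m
  have : m ∈ Submodule.span E {x} := by rw [hx]; trivial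
  obtain ⟨e, he⟩ := Submodule.mem_span_singleton.mp this
  exact ⟨e, he⟩

end Support

section Support2
variable {R : Type*} [CommRing R]
variable {E : Type*} [Ring E] [Algebra R E]

/-- simple modules are killed by elements of the Jacobson radical of `R` (here a
principal ideal `(π)` contained in the radical), assuming `E` is module-finite over `R`. -/
private lemma pi_smul_simple_eq_zero [Module.Finite R E] (π : R)
    (hjac : Ideal.span {π} ≤ Ideal.jacobson (⊥ : Ideal R))
    {L : Type*} [AddCommGroup L] [Module E L] (hL : IsSimpleModule E L) :
    ∀ l : L, algebraMap R E π • l = 0 := by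
  intro l
  have hrange := hL.1.2 (LinearMap.range (piSmulMap (E := E) π L))
  rcases hrange with h | h
  · have : algebraMap R E π • l ∈ LinearMap.range (piSmulMap (E := E) π L) :=
      ⟨l, rfl⟩
    rw [h, Submodule.mem_bot] at this
    exact this
  · exfalso
    letI : Module R L := Module.compHom L (algebraMap R E)
    have hsm : ∀ (r : R) (m : L), r • m = algebraMap R E r • m := fun r m => rfl
    letI : IsScalarTower R E L := ⟨fun r e m => by
      rw [Algebra.smul_def, mul_smul]; rfl⟩
    haveI := hL.nontrivial
    obtain ⟨l₀, hl₀⟩ := exists_ne (0 : L)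
    have hcyc : Submodule.span E {l₀} = ⊤ := by
      rcases hL.1.2 (Submodule.span E {l₀}) with h' | h'
      · exact absurd (Submodule.span_singleton_eq_bot.mp h') hl₀
      · exact h'
    haveI : Module.Finite R L := finite_of_cyclic l₀ hcyc
    have htop : (⊤ : Submodule R L) ≤ Ideal.span {π} • (⊤ : Submodule R L) := by
      intro m _
      have : m ∈ LinearMap.range (piSmulMap (E := E) π L) := by rw [h]; trivial
      obtain ⟨m₁, hm₁⟩ := this
      have : m = π • m₁ := by rw [hsm]; exact hm₁.symm
      rw [this]
      exact Submodule.smul_mem_smul (Ideal.mem_span_singleton_self π) trivial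
    have := Submodule.eq_bot_of_le_smul_of_le_jacobson_bot (Ideal.span {π}) ⊤
      Module.Finite.fg_top htop hjac
    rw [eq_bot_iff] at this
    exact hl₀ ((Submodule.mem_bot R).mp (this trivial))

/-- the kernel of the projective cover map equals `π P`. -/
private lemma ker_eq_pi_smul [Module.Finite R E] {π : R}
    (hmax : (Ideal.span {π}).IsMaximal)
    (hjac : Ideal.span {π} ≤ Ideal.jacobson (⊥ : Ideal R))
    {n : ℕ} {d : Fin n → ℕ}
    (ψ : ((R ⧸ Ideal.span {π}) ⊗[R] E) ≃ₐ[R ⧸ Ideal.span {π}]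
        ((i : Fin n) → Matrix (Fin (d i)) (Fin (d i)) (R ⧸ Ideal.span {π})))
    {P L : Type*} [AddCommGroup P] [Module E P]
    [AddCommGroup L] [Module E L] (hL : IsSimpleModule E L)
    (f : P →ₗ[E] L) (hf : Function.Surjective f)
    (hfsup : ∀ N : Submodule E P, N ⊔ LinearMap.ker f = ⊤ → N = ⊤) :
    LinearMap.ker f = LinearMap.range (piSmulMap (E := E) π P) := by
  set Nπ := LinearMap.range (piSmulMap (E := E) π P) with hNπ
  have hle1 : Nπ ≤ LinearMap.ker f := by
    rintro p ⟨p₀, rfl⟩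
    rw [LinearMap.mem_ker, piSmulMap_apply, map_smul]
    exact pi_smul_simple_eq_zero π hjac hL (f p₀)
  refine le_antisymm ?_ hle1
  -- work in the quotient
  have hMkill : ∀ m : P ⧸ Nπ, algebraMap R E π • m = 0 := by
    intro m
    obtain ⟨p, rfl⟩ := Nπ.mkQ_surjective m
    rw [← map_smul, Submodule.mkQ_apply, Submodule.Quotient.mk_eq_zero]
    exact ⟨p, rfl⟩
  obtain ⟨hcompl, -⟩ := split_aux hmax ψ hMkill
  obtain ⟨C, hC⟩ := hcompl (Submodule.map Nπ.mkQ (LinearMap.ker f))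
  set S := Submodule.map Nπ.mkQ (LinearMap.ker f) with hS
  -- the pullback of C
  set D := Submodule.comap Nπ.mkQ C with hD
  have hDtop : D ⊔ LinearMap.ker f = ⊤ := by
    rw [Submodule.eq_top_iff']
    intro p
    have hmem : Nπ.mkQ p ∈ S ⊔ C := by
      rw [codisjoint_iff.mp hC.2]; trivial
    obtain ⟨s, hs, c, hc, hsc⟩ := Submodule.mem_sup.mp hmem
    obtain ⟨p₁, hp₁, hp₁s⟩ := hs
    obtain ⟨p₂, hp₂⟩ := Nπ.mkQ_surjective c
    have hp₂D : p₂ ∈ D := by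
      rw [hD, Submodule.mem_comap, hp₂]
      exact hc
    have hker : p - p₁ - p₂ ∈ Nπ := by
      have hz : Nπ.mkQ (p - p₁ - p₂) = 0 := by
        rw [map_sub, map_sub, hp₁s, hp₂, ← hsc]
        abel
      rwa [Submodule.mkQ_apply, Submodule.Quotient.mk_eq_zero] at hz
    have hsplit : p = p₂ + (p₁ + (p - p₁ - p₂)) := by abel
    rw [hsplit]
    exact Submodule.add_mem _ (Submodule.mem_sup_left hp₂D)
      (Submodule.mem_sup_right (Submodule.add_mem _ hp₁ (hle1 hker)))
  have hDeq : D = ⊤ := hfsup D hDtop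
  have hCeq : C = ⊤ := by
    rw [eq_top_iff]
    intro m _
    obtain ⟨p, rfl⟩ := Nπ.mkQ_surjective m
    have : p ∈ D := by rw [hDeq]; trivial
    exact this
  have hSbot : S = ⊥ := by
    have := disjoint_iff.mp hC.1
    rw [hCeq, inf_top_eq] at this
    exact this
  intro p hp
  have : Nπ.mkQ p ∈ S := Submodule.mem_map_of_mem hp
  rw [hSbot, Submodule.mem_bot, Submodule.mkQ_apply, Submodule.Quotient.mk_eq_zero] at this
  exact this

end Support2


set_option maxHeartbeats 1000000 in
/-- Let `R` be a DVR with uniformizer `π`, `E` a finite free `R`-algebra with `E/πE`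
split semisimple, and let `P, P'` be projective indecomposable `E`-modules which are
projective covers of non-isomorphic simple `E`-modules `L, L'`.  Then `Hom_E(P, P') = 0`,
and `End_E(P) ≅ R` via the structure map. -/
theorem hom_projCover_eq_zero_and_end_eq_scalars
    {R : Type*} [CommRing R] [IsDomain R] [IsDiscreteValuationRing R]
    (π : R) (hπ : Irreducible π)
    (E : Type*) [Ring E] [Algebra R E] [Module.Finite R E] [Module.Free R E]
    (hsplit : ∃ (n : ℕ) (d : Fin n → ℕ),
      Nonempty (((R ⧸ Ideal.span {π}) ⊗[R] E) ≃ₐ[R ⧸ Ideal.span {π}]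
        ((i : Fin n) → Matrix (Fin (d i)) (Fin (d i)) (R ⧸ Ideal.span {π}))))
    (P P' L L' : Type*)
    [AddCommGroup P] [Module E P] [Module R P] [IsScalarTower R E P] [SMulCommClass E R P]
    [AddCommGroup P'] [Module E P']
    [AddCommGroup L] [Module E L] [AddCommGroup L'] [Module E L']
    (hP : Module.Projective E P) (hP' : Module.Projective E P')
    (hPind : ∀ N₁ N₂ : Submodule E P, IsCompl N₁ N₂ → N₁ = ⊥ ∨ N₂ = ⊥)
    (hP'ind : ∀ N₁ N₂ : Submodule E P', IsCompl N₁ N₂ → N₁ = ⊥ ∨ N₂ = ⊥)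
    (hL : IsSimpleModule E L) (hL' : IsSimpleModule E L')
    (f : P →ₗ[E] L) (hf : Function.Surjective f)
    (hfsup : ∀ N : Submodule E P, N ⊔ LinearMap.ker f = ⊤ → N = ⊤)
    (f' : P' →ₗ[E] L') (hf' : Function.Surjective f')
    (hf'sup : ∀ N : Submodule E P', N ⊔ LinearMap.ker f' = ⊤ → N = ⊤)
    (hLL' : IsEmpty (L ≃ₗ[E] L')) :
    (∀ g : P →ₗ[E] P', g = 0) ∧
      Function.Bijective (algebraMap R (Module.End E P)) := by

  obtain ⟨n, d, ⟨ψ⟩⟩ := hsplit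
  have huni := (IsDiscreteValuationRing.irreducible_iff_uniformizer π).mp hπ
  have hmax : (Ideal.span {π}).IsMaximal := by
    rw [← huni]
    exact IsLocalRing.maximalIdeal.isMaximal R
  have hjac : Ideal.span {π} ≤ Ideal.jacobson (⊥ : Ideal R) := by
    rw [IsLocalRing.jacobson_eq_maximalIdeal (⊥ : Ideal R) bot_ne_top, ← huni]
  haveI := hL.nontrivial
  haveI := hL'.nontrivial
  obtain ⟨x, hx⟩ := cyclic_of_cover hL f hf hfsup
  obtain ⟨x', hx'⟩ := cyclic_of_cover hL' f' hf' hf'sup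
  haveI : Module.Finite R P := finite_of_cyclic x hx
  letI : Module R P' := Module.compHom P' (algebraMap R E)
  have hsm' : ∀ (r : R) (p : P'), r • p = algebraMap R E r • p := fun _ _ => rfl
  letI : IsScalarTower R E P' := ⟨fun r e p => by rw [Algebra.smul_def, mul_smul]; rfl⟩
  letI : SMulCommClass E R P' := ⟨fun e r p => by
    rw [hsm', hsm', ← mul_smul, ← Algebra.commutes r e, mul_smul]⟩
  haveI : Module.Finite R P' := finite_of_cyclic x' hx'
  have hker' : LinearMap.ker f' = LinearMap.range (piSmulMap (E := E) π P') :=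
    ker_eq_pi_smul hmax hjac ψ hL' f' hf' hf'sup
  have hkerP : LinearMap.ker f = LinearMap.range (piSmulMap (E := E) π P) :=
    ker_eq_pi_smul hmax hjac ψ hL f hf hfsup
  have hkfne : LinearMap.ker f ≠ ⊤ := by
    intro h
    obtain ⟨l, hl⟩ := exists_ne (0 : L)
    obtain ⟨p, hp⟩ := hf l
    have hpk : p ∈ LinearMap.ker f := by rw [h]; trivial
    rw [LinearMap.mem_ker, hp] at hpk
    exact hl hpk
  have hkf'ne : LinearMap.ker f' ≠ ⊤ := by
    intro h
    obtain ⟨l', hl'⟩ := exists_ne (0 : L')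
    obtain ⟨p', hp'⟩ := hf' l'
    have hpk : p' ∈ LinearMap.ker f' := by rw [h]; trivial
    rw [LinearMap.mem_ker, hp'] at hpk
    exact hl' hpk
  -- every map P → P' lands in π P'
  have hbound : ∀ g : P →ₗ[E] P',
      LinearMap.range g ≤ LinearMap.range (piSmulMap (E := E) π P') := by
    intro g
    by_cases hgtop : LinearMap.range g = ⊤
    · exfalso
      obtain ⟨s, hs⟩ := Module.projective_lifting_property g LinearMap.id
        (LinearMap.range_eq_top.mp hgtop)
      have hgs : ∀ y : P', g (s y) = y := fun y => LinearMap.congr_fun hs y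
      have hcompl : IsCompl (LinearMap.ker g) (LinearMap.range s) := by
        constructor
        · rw [disjoint_iff, eq_bot_iff]
          intro p hp
          obtain ⟨hk, hr⟩ := Submodule.mem_inf.mp hp
          obtain ⟨y, rfl⟩ := hr
          rw [LinearMap.mem_ker, hgs] at hk
          rw [Submodule.mem_bot, hk, map_zero]
        · rw [codisjoint_iff, Submodule.eq_top_iff']
          intro p
          have h1 : p - s (g p) ∈ LinearMap.ker g := by
            rw [LinearMap.mem_ker, map_sub, hgs, sub_self]
          have h2 : p = (p - s (g p)) + s (g p) := by abel
          rw [h2]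
          exact Submodule.add_mem _ (Submodule.mem_sup_left h1)
            (Submodule.mem_sup_right ⟨g p, rfl⟩)
      rcases hPind _ _ hcompl with hkg | hrs
      · -- case: g is an isomorphism
        have hg : Function.Bijective g := ⟨LinearMap.ker_eq_bot.mp hkg,
          LinearMap.range_eq_top.mp hgtop⟩
        let e := LinearEquiv.ofBijective g hg
        have hecoe : ∀ p : P, (e : P →ₗ[E] P') p = g p := fun p => rfl
        have hmape : Submodule.map (e : P →ₗ[E] P') (LinearMap.ker f) = LinearMap.ker f' := by
          apply le_antisymm
          · apply proper_le_ker hL' f' hf'sup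
            intro htop
            apply hkfne
            apply Submodule.map_injective_of_injective
              (show Function.Injective (e : P →ₗ[E] P') from e.injective)
            rw [htop, Submodule.map_top]
            exact (LinearMap.range_eq_top.mpr e.surjective).symm
          · intro y hy
            have hyD : e.symm y ∈ Submodule.comap (e : P →ₗ[E] P') (LinearMap.ker f') := by
              rw [Submodule.mem_comap]
              show f' ((e : P →ₗ[E] P') (e.symm y)) = 0
              have : (e : P →ₗ[E] P') (e.symm y) = y := e.apply_symm_apply y
              rw [this]
              exact hy
            have hcne : Submodule.comap (e : P →ₗ[E] P') (LinearMap.ker f') ≠ ⊤ := by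
              intro h
              apply hkf'ne
              rw [Submodule.eq_top_iff']
              intro p'
              have hp : e.symm p' ∈ Submodule.comap (e : P →ₗ[E] P') (LinearMap.ker f') := by
                rw [h]; trivial
              rw [Submodule.mem_comap] at hp
              have : (e : P →ₗ[E] P') (e.symm p') = p' := e.apply_symm_apply p'
              rwa [this] at hp
            refine ⟨e.symm y, proper_le_ker hL f hfsup _ hcne hyD, ?_⟩
            exact e.apply_symm_apply y
        exact (hLL'.false ((((f.quotKerEquivOfSurjective hf).symm).trans
          (Submodule.Quotient.equiv (LinearMap.ker f) (LinearMap.ker f') e hmape)).trans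
          (f'.quotKerEquivOfSurjective hf'))).elim
      · -- case: the section is zero
        obtain ⟨l', hl'⟩ := exists_ne (0 : L')
        obtain ⟨p', hp'⟩ := hf' l'
        have h1 : s p' ∈ LinearMap.range s := ⟨p', rfl⟩
        rw [hrs, Submodule.mem_bot] at h1
        have h2 : p' = 0 := by rw [← hgs p', h1, map_zero]
        rw [h2, map_zero] at hp'
        exact hl' hp'.symm
    · have h1 : LinearMap.range g ≤ LinearMap.ker f' := proper_le_ker hL' f' hf'sup _ hgtop
      rw [hker'] at h1
      exact h1
  have part1 : ∀ g : P →ₗ[E] P', g = 0 := by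
    haveI : IsNoetherian R P' := isNoetherian_of_isNoetherianRing_of_finite R P'
    let ev : (P →ₗ[E] P') →ₗ[R] P' :=
      { toFun := fun g => g x
        map_add' := fun g₁ g₂ => rfl
        map_smul' := fun r g₁ => rfl }
    have hevinj : Function.Injective ev := by
      intro g₁ g₂ h
      ext p
      have hp : p ∈ Submodule.span E {x} := by rw [hx]; trivial
      obtain ⟨e, rfl⟩ := Submodule.mem_span_singleton.mp hp
      have hxeq : g₁ x = g₂ x := h
      rw [map_smul, map_smul, hxeq]
    haveI : IsNoetherian R (P →ₗ[E] P') := isNoetherian_of_injective ev hevinj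
    have hfg : (⊤ : Submodule R (P →ₗ[E] P')).FG := IsNoetherian.noetherian ⊤
    have hsmul : (⊤ : Submodule R (P →ₗ[E] P')) ≤ Ideal.span {π} • ⊤ := by
      intro g _
      obtain ⟨g₁, hg₁⟩ := Module.projective_lifting_property
        ((piSmulMap (E := E) π P').rangeRestrict)
        (g.codRestrict _ (fun p => hbound g ⟨p, rfl⟩))
        (LinearMap.surjective_rangeRestrict _)
      have hg₁' : g = π • g₁ := by
        ext p
        have hcoe := congrArg Subtype.val (LinearMap.congr_fun hg₁ p)
        show g p = π • (g₁ p)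
        rw [hsm']
        exact hcoe.symm
      rw [hg₁']
      exact Submodule.smul_mem_smul (Ideal.mem_span_singleton_self π) trivial
    have hbot := Submodule.eq_bot_of_le_smul_of_le_jacobson_bot (Ideal.span {π}) ⊤ hfg hsmul hjac
    intro g
    have hg : g ∈ (⊥ : Submodule R (P →ₗ[E] P')) := by rw [← hbot]; trivial
    simpa using hg
  refine ⟨part1, ?_, ?_⟩
  · -- injectivity of R → End
    rw [injective_iff_map_eq_zero]
    intro r hr
    have hsurj : Function.Surjective (LinearMap.toSpanSingleton E P x) := by
      rw [← LinearMap.range_eq_top, ← LinearMap.span_singleton_eq_range]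
      exact hx
    obtain ⟨s, hs⟩ := Module.projective_lifting_property
      (LinearMap.toSpanSingleton E P x) LinearMap.id hsurj
    obtain ⟨l, hl⟩ := exists_ne (0 : L)
    obtain ⟨p₀, hp₀⟩ := hf l
    have hp₀ne : p₀ ≠ 0 := by
      intro h
      rw [h, map_zero] at hp₀
      exact hl hp₀.symm
    have h1 : r • p₀ = 0 := by
      have h2 : (algebraMap R (Module.End E P) r) p₀ = 0 := by rw [hr]; rfl
      rwa [Module.algebraMap_end_apply] at h2
    have h3 : r • s p₀ = 0 := by
      calc r • s p₀ = algebraMap R E r • s p₀ := (algebraMap_smul E r (s p₀)).symm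
        _ = s (algebraMap R E r • p₀) := (map_smul s _ _).symm
        _ = s (r • p₀) := by rw [algebraMap_smul]
        _ = 0 := by rw [h1, map_zero]
    rcases smul_eq_zero.mp h3 with h | h
    · exact h
    · exfalso
      apply hp₀ne
      have h4 := LinearMap.congr_fun hs p₀
      rw [LinearMap.coe_comp, Function.comp_apply, h, map_zero] at h4
      exact h4.symm
  · -- surjectivity of R → End
    set Nπ := LinearMap.range (piSmulMap (E := E) π P) with hNπ
    have hMkill : ∀ m : P ⧸ Nπ, algebraMap R E π • m = 0 := by
      intro m
      obtain ⟨p, rfl⟩ := Nπ.mkQ_surjective m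
      rw [← map_smul, Submodule.mkQ_apply, Submodule.Quotient.mk_eq_zero]
      exact ⟨p, rfl⟩
    obtain ⟨-, hend⟩ := split_aux hmax ψ hMkill
    have hsimple : ∀ S : Submodule E (P ⧸ Nπ), S = ⊥ ∨ S = ⊤ := by
      intro S
      by_cases hD : Submodule.comap Nπ.mkQ S = ⊤
      · right
        rw [Submodule.eq_top_iff']
        intro m
        obtain ⟨p, rfl⟩ := Nπ.mkQ_surjective m
        have : p ∈ Submodule.comap Nπ.mkQ S := by rw [hD]; trivial
        exact this
      · left
        have hDk : Submodule.comap Nπ.mkQ S ≤ LinearMap.ker f :=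
          proper_le_ker hL f hfsup _ hD
        rw [hkerP] at hDk
        rw [eq_bot_iff]
        intro m hm
        obtain ⟨p, rfl⟩ := Nπ.mkQ_surjective m
        have hp : p ∈ Submodule.comap Nπ.mkQ S := hm
        have hpN : p ∈ Nπ := hDk hp
        rw [Submodule.mem_bot, Submodule.mkQ_apply, Submodule.Quotient.mk_eq_zero]
        exact hpN
    haveI : IsNoetherian R P := isNoetherian_of_isNoetherianRing_of_finite R P
    let evE : Module.End E P →ₗ[R] P :=
      { toFun := fun φ => φ x
        map_add' := fun a b => rfl
        map_smul' := fun r a => rfl }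
    have hevinj : Function.Injective evE := by
      intro g₁ g₂ h
      ext p
      have hp : p ∈ Submodule.span E {x} := by rw [hx]; trivial
      obtain ⟨e, rfl⟩ := Submodule.mem_span_singleton.mp hp
      have hxeq : g₁ x = g₂ x := h
      rw [map_smul, map_smul, hxeq]
    haveI : IsNoetherian R (Module.End E P) := isNoetherian_of_injective evE hevinj
    have hfgE : (⊤ : Submodule R (Module.End E P)).FG := IsNoetherian.noetherian ⊤
    have hdecomp : ∀ φ : Module.End E P, ∃ (r : R) (ψ₁ : Module.End E P),
        φ = algebraMap R (Module.End E P) r + π • ψ₁ := by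
      intro φ
      have hpres : ∀ p ∈ Nπ, φ p ∈ Nπ := by
        rintro p ⟨p₀, rfl⟩
        refine ⟨φ p₀, ?_⟩
        rw [piSmulMap_apply, piSmulMap_apply, map_smul]
      let η : (P ⧸ Nπ) →ₗ[E] (P ⧸ Nπ) := Submodule.mapQ Nπ Nπ φ hpres
      obtain ⟨r, hr⟩ := hend hsimple η
      have hdiff : ∀ p : P, φ p - algebraMap R E r • p ∈ Nπ := by
        intro p
        have h1 := hr (Nπ.mkQ p)
        rw [Submodule.mkQ_apply, Submodule.mapQ_apply] at h1
        have h2 : algebraMap R E r • (Submodule.Quotient.mk p : P ⧸ Nπ)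
            = Submodule.Quotient.mk (algebraMap R E r • p) :=
          (Submodule.Quotient.mk_smul Nπ _ _).symm
        rw [h2] at h1
        rw [← Submodule.Quotient.mk_eq_zero (p := Nπ)]
        rw [Submodule.Quotient.mk_sub, h1, sub_self]
      have hrange : ∀ p : P, (φ - algebraMap R (Module.End E P) r) p ∈ Nπ := by
        intro p
        have heq : (φ - algebraMap R (Module.End E P) r) p
            = φ p - algebraMap R E r • p := by
          rw [LinearMap.sub_apply, Module.algebraMap_end_apply, algebraMap_smul]
        rw [heq]
        exact hdiff p
      obtain ⟨ψ₁, hψ₁⟩ := Module.projective_lifting_property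
        ((piSmulMap (E := E) π P).rangeRestrict)
        ((φ - algebraMap R (Module.End E P) r).codRestrict Nπ hrange)
        (LinearMap.surjective_rangeRestrict _)
      refine ⟨r, ψ₁, ?_⟩
      ext p
      have hcoe := congrArg Subtype.val (LinearMap.congr_fun hψ₁ p)
      have hcoe' : algebraMap R E π • (ψ₁ p) = φ p - algebraMap R E r • p := by
        have heq : (φ - algebraMap R (Module.End E P) r) p
            = φ p - algebraMap R E r • p := by
          rw [LinearMap.sub_apply, Module.algebraMap_end_apply, algebraMap_smul]
        rw [← heq]
        exact hcoe
      show φ p = (algebraMap R (Module.End E P) r + π • ψ₁) p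
      rw [LinearMap.add_apply, LinearMap.smul_apply, Module.algebraMap_end_apply]
      have h5 : π • (ψ₁ p) = algebraMap R E π • ψ₁ p := (algebraMap_smul E π _).symm
      have h6 : r • p = algebraMap R E r • p := (algebraMap_smul E r p).symm
      rw [h5, h6, hcoe']
      abel
    have htople : (⊤ : Submodule R (Module.End E P)) ≤
        Submodule.span R {(1 : Module.End E P)} ⊔ Ideal.span {π} • ⊤ := by
      intro φ _
      obtain ⟨r, ψ₁, hφ⟩ := hdecomp φ
      rw [hφ]
      refine Submodule.add_mem _ (Submodule.mem_sup_left ?_) (Submodule.mem_sup_right ?_)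
      · rw [Algebra.algebraMap_eq_smul_one]
        exact Submodule.smul_mem _ r (Submodule.mem_span_singleton_self _)
      · exact Submodule.smul_mem_smul (Ideal.mem_span_singleton_self π) trivial
    have hNak := Submodule.le_of_le_smul_of_le_jacobson_bot hfgE hjac htople
    intro φ
    have hφmem : φ ∈ Submodule.span R {(1 : Module.End E P)} := hNak trivial
    obtain ⟨r, hrφ⟩ := Submodule.mem_span_singleton.mp hφmem
    exact ⟨r, by rw [Algebra.algebraMap_eq_smul_one, hrφ]⟩
end

section
/- Let R be a commutative ring and B a finite R-algebra. Suppose S is a commutative faithfully flat R-algebra such that B ⊗_R S is a separable S-algebra. Then B is a separable R-algebra. -/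
open scoped TensorProduct

/-- An `R`-algebra `B` is separable if there is a separability idempotent
`e ∈ B ⊗[R] B`, i.e. `μ(e) = 1` and `(b ⊗ 1) * e = e * (1 ⊗ b)` for all `b ∈ B`
(equivalently, `B` is projective over `B ⊗[R] Bᵒᵖ`). -/
def IsSeparableAlgebra (R : Type*) (B : Type*) [CommRing R] [Ring B] [Algebra R B] : Prop :=
  ∃ e : B ⊗[R] B, LinearMap.mul' R B e = 1 ∧
    ∀ b : B, (b ⊗ₜ[R] (1 : B)) * e = e * ((1 : B) ⊗ₜ[R] b)

set_option synthInstance.maxHeartbeats 1000000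
set_option maxHeartbeats 1000000

open TensorProduct LinearMap

section aux
variable (R S : Type*) [CommRing R] [CommRing S] [Algebra R S]

/-- For a faithfully flat algebra `S`, the map `m ↦ 1 ⊗ m` is injective on any module. -/
lemma SepDescent.eq_zero_of_one_tmul_eq_zero [Module.FaithfullyFlat R S]
    {M : Type*} [AddCommGroup M] [Module R M]
    (m : M) (h : (1:S) ⊗ₜ[R] m = 0) : m = 0 := by
  have hf : LinearMap.lTensor S (LinearMap.toSpanSingleton R M m) = 0 := by
    apply TensorProduct.ext'
    intro s r
    have h2 : s ⊗ₜ[R] m = s • ((1:S) ⊗ₜ[R] m) := by rw [smul_tmul', smul_eq_mul, mul_one]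
    simp only [lTensor_tmul, toSpanSingleton_apply, LinearMap.zero_apply]
    rw [tmul_smul, h2, h, smul_zero, smul_zero]
  have := (Module.FaithfullyFlat.zero_iff_lTensor_zero R S (LinearMap.toSpanSingleton R M m)).2 hf
  simpa using LinearMap.congr_fun this 1

variable (B : Type*) [Ring B] [Algebra R B]

/-- The canonical `S`-linear equivalence `(S ⊗[R] B) ⊗[S] (S ⊗[R] B) ≃ S ⊗[R] (B ⊗[R] B)`. -/
noncomputable def SepDescent.sepL : (S ⊗[R] B) ⊗[S] (S ⊗[R] B) ≃ₗ[S] S ⊗[R] (B ⊗[R] B) :=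
  (TensorProduct.AlgebraTensorModule.cancelBaseChange R S S (S ⊗[R] B) B).trans
    (TensorProduct.AlgebraTensorModule.assoc R R S S B B)

namespace SepDescent

@[simp] lemma sepL_tmul (s t : S) (b₁ b₂ : B) :
    sepL R S B ((s ⊗ₜ[R] b₁) ⊗ₜ[S] (t ⊗ₜ[R] b₂)) = (t * s) ⊗ₜ[R] (b₁ ⊗ₜ[R] b₂) := by
  simp [sepL, smul_tmul', smul_eq_mul]

lemma sepL_mul' (x : (S ⊗[R] B) ⊗[S] (S ⊗[R] B)) :
    LinearMap.lTensor S (LinearMap.mul' R B) (sepL R S B x)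
      = LinearMap.mul' S (S ⊗[R] B) x := by
  induction x using TensorProduct.induction_on with
  | zero => simp
  | add u v hu hv => simp only [map_add, hu, hv]
  | tmul u v =>
    induction u using TensorProduct.induction_on with
    | zero => simp [TensorProduct.zero_tmul]
    | add u1 u2 h1 h2 => simp only [TensorProduct.add_tmul, map_add, h1, h2]
    | tmul s b1 =>
      induction v using TensorProduct.induction_on with
      | zero => simp [TensorProduct.tmul_zero]
      | add v1 v2 h1 h2 => simp only [TensorProduct.tmul_add, map_add, h1, h2]
      | tmul t b2 =>
        simp [Algebra.TensorProduct.tmul_mul_tmul, mul_comm s t]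

lemma sepL_mulLeft (b₀ : B) (x : (S ⊗[R] B) ⊗[S] (S ⊗[R] B)) :
    sepL R S B ((((1:S) ⊗ₜ[R] b₀) ⊗ₜ[S] (1 : S ⊗[R] B)) * x)
      = ((1:S) ⊗ₜ[R] (b₀ ⊗ₜ[R] (1:B))) * (sepL R S B x) := by
  induction x using TensorProduct.induction_on with
  | zero => simp
  | add u v hu hv => simp only [mul_add, map_add, hu, hv]
  | tmul u v =>
    induction u using TensorProduct.induction_on with
    | zero => simp [TensorProduct.zero_tmul]
    | add u1 u2 h1 h2 =>
        simp only [TensorProduct.add_tmul, mul_add, map_add, h1, h2]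
    | tmul s b1 =>
      induction v using TensorProduct.induction_on with
      | zero => simp [TensorProduct.tmul_zero]
      | add v1 v2 h1 h2 =>
          simp only [TensorProduct.tmul_add, mul_add, map_add, h1, h2]
      | tmul t b2 =>
        rw [Algebra.TensorProduct.tmul_mul_tmul, Algebra.TensorProduct.tmul_mul_tmul,
          one_mul, one_mul, sepL_tmul, sepL_tmul, Algebra.TensorProduct.tmul_mul_tmul,
          Algebra.TensorProduct.tmul_mul_tmul, one_mul, one_mul]

lemma sepL_mulRight (b₀ : B) (x : (S ⊗[R] B) ⊗[S] (S ⊗[R] B)) :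
    sepL R S B (x * ((1 : S ⊗[R] B) ⊗ₜ[S] ((1:S) ⊗ₜ[R] b₀)))
      = (sepL R S B x) * ((1:S) ⊗ₜ[R] ((1:B) ⊗ₜ[R] b₀)) := by
  induction x using TensorProduct.induction_on with
  | zero => simp
  | add u v hu hv => simp only [add_mul, map_add, hu, hv]
  | tmul u v =>
    induction u using TensorProduct.induction_on with
    | zero => simp [TensorProduct.zero_tmul]
    | add u1 u2 h1 h2 =>
        simp only [TensorProduct.add_tmul, add_mul, map_add, h1, h2]
    | tmul s b1 =>
      induction v using TensorProduct.induction_on with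
      | zero => simp [TensorProduct.tmul_zero]
      | add v1 v2 h1 h2 =>
          simp only [TensorProduct.tmul_add, add_mul, map_add, h1, h2]
      | tmul t b2 =>
        rw [Algebra.TensorProduct.tmul_mul_tmul, Algebra.TensorProduct.tmul_mul_tmul,
          mul_one, mul_one, sepL_tmul, sepL_tmul, Algebra.TensorProduct.tmul_mul_tmul,
          Algebra.TensorProduct.tmul_mul_tmul, mul_one, mul_one]

lemma lTensor_mulLeft_apply (c : B ⊗[R] B) (y : S ⊗[R] (B ⊗[R] B)) :
    LinearMap.lTensor S (LinearMap.mulLeft R c) y = ((1:S) ⊗ₜ[R] c) * y := by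
  induction y using TensorProduct.induction_on with
  | zero => simp
  | add u v hu hv => simp only [map_add, mul_add, hu, hv]
  | tmul s m => simp [Algebra.TensorProduct.tmul_mul_tmul]

lemma lTensor_mulRight_apply (c : B ⊗[R] B) (y : S ⊗[R] (B ⊗[R] B)) :
    LinearMap.lTensor S (LinearMap.mulRight R c) y = y * ((1:S) ⊗ₜ[R] c) := by
  induction y using TensorProduct.induction_on with
  | zero => simp
  | add u v hu hv => simp only [map_add, add_mul, hu, hv]
  | tmul s m => simp [Algebra.TensorProduct.tmul_mul_tmul]

end SepDescent

end aux

section compat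
variable {R : Type*} [CommRing R] {M N P Q : Type*} [AddCommGroup M] [AddCommGroup N]
  [AddCommGroup P] [AddCommGroup Q] [Module R M] [Module R N] [Module R P] [Module R Q]

lemma SepDescent.lTensor_prod_apply (f : M →ₗ[R] N) (g : M →ₗ[R] P) (x : Q ⊗[R] M) :
    TensorProduct.prodRight R R Q N P (LinearMap.lTensor Q (f.prod g) x)
      = (LinearMap.lTensor Q f x, LinearMap.lTensor Q g x) := by
  induction x using TensorProduct.induction_on with
  | zero => simp; rfl
  | add u v hu hv => simp only [map_add, hu, hv, Prod.mk_add_mk]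
  | tmul q m => simp

lemma SepDescent.lTensor_pi_apply {n : ℕ} (ψ : Fin n → (M →ₗ[R] P)) (x : Q ⊗[R] M) (i : Fin n) :
    TensorProduct.piRight R R Q (fun _ : Fin n => P)
        (LinearMap.lTensor Q (LinearMap.pi ψ) x) i
      = LinearMap.lTensor Q (ψ i) x := by
  induction x using TensorProduct.induction_on with
  | zero => simp
  | add u v hu hv => simp only [map_add, Pi.add_apply, hu, hv]
  | tmul q m => simp

end compat

/-- **Faithfully flat descent of separability.** If `B` is a finite `R`-algebra and `S` is a
commutative faithfully flat `R`-algebra such that `S ⊗[R] B` is a separable `S`-algebra,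
then `B` is a separable `R`-algebra. -/
theorem isSeparableAlgebra_of_faithfullyFlat
    {R : Type*} [CommRing R] (B : Type*) [Ring B] [Algebra R B] [Module.Finite R B]
    (S : Type*) [CommRing S] [Algebra R S] [Module.FaithfullyFlat R S]
    (h : IsSeparableAlgebra S (S ⊗[R] B)) :
    IsSeparableAlgebra R B := by
  classical
  obtain ⟨e', he1, he2⟩ := h
  obtain ⟨n, b, hb⟩ := Module.Finite.exists_fin (R := R) (M := B)
  set ψ : Fin n → (B ⊗[R] B →ₗ[R] B ⊗[R] B) :=
    fun i => LinearMap.mulLeft R ((b i) ⊗ₜ[R] (1:B)) - LinearMap.mulRight R ((1:B) ⊗ₜ[R] (b i))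
    with hψdef
  set Φ : B ⊗[R] B →ₗ[R] B × (Fin n → B ⊗[R] B) :=
    (LinearMap.mul' R B).prod (LinearMap.pi ψ) with hΦdef
  set ε : S ⊗[R] (B ⊗[R] B) := SepDescent.sepL R S B e' with hε
  -- first component
  have hA : LinearMap.lTensor S (LinearMap.mul' R B) ε = (1:S) ⊗ₜ[R] (1:B) := by
    rw [hε, SepDescent.sepL_mul', he1, Algebra.TensorProduct.one_def]
  -- other components
  have hBi : ∀ i, LinearMap.lTensor S (ψ i) ε = 0 := by
    intro i
    have h2 := he2 ((1:S) ⊗ₜ[R] b i)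
    rw [hψdef]
    simp only [LinearMap.lTensor_sub, LinearMap.sub_apply]
    rw [SepDescent.lTensor_mulLeft_apply, SepDescent.lTensor_mulRight_apply, hε,
      ← SepDescent.sepL_mulLeft, ← SepDescent.sepL_mulRight, h2, sub_self]
  -- `ε` maps to the target element under `lTensor S Φ`
  have hε' : LinearMap.lTensor S Φ ε
      = (1:S) ⊗ₜ[R] (((1:B), (0 : Fin n → B ⊗[R] B))) := by
    apply (TensorProduct.prodRight R R S B (Fin n → B ⊗[R] B)).injective
    rw [hΦdef, SepDescent.lTensor_prod_apply, TensorProduct.prodRight_tmul]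
    have hpi0 : LinearMap.lTensor S (LinearMap.pi ψ) ε = 0 := by
      apply (TensorProduct.piRight R R S (fun _ : Fin n => B ⊗[R] B)).injective
      funext i
      rw [SepDescent.lTensor_pi_apply, hBi i, map_zero]
      rfl
    rw [hA, hpi0, TensorProduct.tmul_zero]
  -- descend
  have hmem : ((1:B), (0 : Fin n → B ⊗[R] B)) ∈ LinearMap.range Φ := by
    rw [← Submodule.Quotient.mk_eq_zero (LinearMap.range Φ)]
    apply SepDescent.eq_zero_of_one_tmul_eq_zero R S
    have hrfl : (1:S) ⊗ₜ[R] (Submodule.Quotient.mk (p := LinearMap.range Φ)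
          ((1:B), (0 : Fin n → B ⊗[R] B)))
        = LinearMap.lTensor S (LinearMap.range Φ).mkQ
            ((1:S) ⊗ₜ[R] (((1:B), (0 : Fin n → B ⊗[R] B)))) := rfl
    rw [hrfl]
    have hexact := lTensor_exact S (LinearMap.exact_map_mkQ_range Φ)
      (Submodule.mkQ_surjective _)
    exact (hexact _).2 ⟨ε, hε'⟩
  obtain ⟨e, he⟩ := hmem
  have hφ : LinearMap.mul' R B e = 1 := congrArg Prod.fst he
  have hψ0 : ∀ i, ψ i e = 0 := fun i => congrFun (congrArg Prod.snd he) i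
  refine ⟨e, hφ, ?_⟩
  have hgen : ∀ i, ((b i) ⊗ₜ[R] (1:B)) * e = e * ((1:B) ⊗ₜ[R] (b i)) := by
    intro i
    have := hψ0 i
    rw [hψdef] at this
    simpa [sub_eq_zero, LinearMap.sub_apply] using this
  intro x
  have hx : x ∈ Submodule.span R (Set.range b) := hb ▸ Submodule.mem_top
  refine Submodule.span_induction ?_ ?_ ?_ ?_ hx
  · rintro y ⟨i, rfl⟩
    exact hgen i
  · simp
  · intro y z _ _ hy hz
    rw [TensorProduct.add_tmul, add_mul, hy, hz, TensorProduct.tmul_add, mul_add]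
  · intro r y _ hy
    rw [← TensorProduct.smul_tmul', smul_mul_assoc, hy, TensorProduct.tmul_smul,
      mul_smul_comm]
end

section
/- Let R be a discrete valuation ring with maximal ideal 𝔪 = (π) and residue field F = R/𝔪. Let f ∈ R[x] be a monic polynomial whose image f̄ ∈ F[x] is squarefree (separable), and such that f is irreducible over the fraction field Q of R. Then the ring R[x]/(f) is integrally closed in its fraction field Q[x]/(f). Consequently R[x]/(f) is a Dedekind domain. -/
open Polynomial

section Aux

variable {R : Type*} [CommRing R] [IsDomain R] [IsDiscreteValuationRing R]

/-- Key combinatorial lemma: if `P` is a prime of `R[X]⧸(f)` containing the image of `C π`,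
then for every `x ∈ P` there is an `H ∉ P` with `x * H` in the ideal generated by the image
of `C π`. This is where squarefreeness of the reduction is used. -/
theorem aux_key (π : R) (hmax : (Ideal.span {π} : Ideal R).IsMaximal)
    (f : R[X]) (hmonic : f.Monic)
    (hsqf : Squarefree (f.map (Ideal.Quotient.mk (Ideal.span {π}))))
    (P : Ideal (R[X] ⧸ Ideal.span {f})) (hP : P.IsPrime)
    (hπP : Ideal.Quotient.mk (Ideal.span {f}) (C π) ∈ P)
    (x : R[X] ⧸ Ideal.span {f}) (hx : x ∈ P) :
    ∃ H, H ∉ P ∧ x * H ∈ Ideal.span {Ideal.Quotient.mk (Ideal.span {f}) (C π)} := by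
  classical
  letI : Field (R ⧸ Ideal.span {π}) := Ideal.Quotient.field _
  set σ : R →+* R ⧸ Ideal.span {π} := Ideal.Quotient.mk _ with hσ
  set φ : R[X] →+* (R ⧸ Ideal.span {π})[X] := mapRingHom σ with hφ
  set fb : (R ⧸ Ideal.span {π})[X] := f.map σ with hfb
  have hφs : Function.Surjective φ := Polynomial.map_surjective σ Ideal.Quotient.mk_surjective
  have hkerφ : RingHom.ker φ = Ideal.span {C π} := by
    rw [hφ, Polynomial.ker_mapRingHom, hσ, Ideal.mk_ker, Ideal.map_span]
    simp
  set mkf : R[X] →+* R[X] ⧸ Ideal.span {f} := Ideal.Quotient.mk _ with hmkf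
  -- the contracted prime in R[X]
  set P' : Ideal R[X] := Ideal.comap mkf P with hP'
  haveI : P'.IsPrime := Ideal.IsPrime.comap _
  have hfP' : f ∈ P' := by
    have h0 : mkf f = 0 := Ideal.Quotient.eq_zero_iff_mem.mpr (Ideal.mem_span_singleton_self f)
    show mkf f ∈ P
    rw [h0]; exact P.zero_mem
  have hπP' : C π ∈ P' := hπP
  have hker_le : RingHom.ker φ ≤ P' := by
    rw [hkerφ, Ideal.span_le, Set.singleton_subset_iff]
    exact hπP'
  -- the corresponding prime in F[X]
  set q : Ideal ((R ⧸ Ideal.span {π})[X]) := Ideal.map φ P' with hq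
  haveI hqprime : q.IsPrime := Ideal.map_isPrime_of_surjective hφs hker_le
  have hcomapq : Ideal.comap φ q = P' := by
    rw [hq, Ideal.comap_map_of_surjective φ hφs, ← RingHom.ker_eq_comap_bot, hkerφ]
    exact sup_eq_left.mpr (by rwa [Ideal.span_le, Set.singleton_subset_iff])
  have hfbq : fb ∈ q := Ideal.mem_map_of_mem φ hfP'
  have hfb0 : fb ≠ 0 := (hmonic.map σ).ne_zero
  -- q is principal, generated by a prime g dividing fb
  obtain ⟨g, hg⟩ := IsPrincipalIdealRing.principal q
  have hg' : q = Ideal.span {g} := hg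
  have hg0 : g ≠ 0 := by
    rintro rfl
    rw [hg', Ideal.span_singleton_eq_bot.mpr rfl] at hfbq
    exact hfb0 hfbq
  have hgdvd : g ∣ fb := Ideal.mem_span_singleton.mp (hg' ▸ hfbq)
  obtain ⟨h, hfactor⟩ := hgdvd
  have hgh : ¬ g ∣ h := by
    intro ⟨k, hk⟩
    refine (hqprime.ne_top (Ideal.eq_top_of_isUnit_mem _ ?_ (hsqf g ?_)))
    · rw [hg']; exact Ideal.subset_span rfl
    · exact ⟨k, by rw [hfactor, hk]; ring⟩
  obtain ⟨h₀, hh₀⟩ := hφs h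
  refine ⟨mkf h₀, ?_, ?_⟩
  · intro hmem
    have : h₀ ∈ P' := hmem
    have : h ∈ q := hh₀ ▸ Ideal.mem_map_of_mem φ this
    exact hgh (Ideal.mem_span_singleton.mp (hg' ▸ this))
  · obtain ⟨x₀, rfl⟩ := Ideal.Quotient.mk_surjective x
    have hx₀ : x₀ ∈ P' := hx
    have : φ x₀ ∈ q := Ideal.mem_map_of_mem φ hx₀
    obtain ⟨z, hz⟩ := Ideal.mem_span_singleton.mp (hg' ▸ this)
    have hmem : x₀ * h₀ ∈ Ideal.comap φ (Ideal.span {fb}) := by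
      simp only [Ideal.mem_comap, map_mul, hz, hh₀]
      exact Ideal.mem_span_singleton.mpr ⟨z, by rw [hfactor]; ring⟩
    have hcomapfb : Ideal.comap φ (Ideal.span {fb}) = Ideal.span {C π, f} := by
      have h1 : Ideal.span {fb} = Ideal.map φ (Ideal.span {f}) := by
        rw [Ideal.map_span, Set.image_singleton]
        rfl
      rw [h1, Ideal.comap_map_of_surjective φ hφs, ← RingHom.ker_eq_comap_bot, hkerφ]
      rw [Ideal.span_insert]
      exact sup_comm _ _
    rw [hcomapfb] at hmem
    have : mkf (x₀ * h₀) ∈ Ideal.map mkf (Ideal.span {C π, f}) := Ideal.mem_map_of_mem _ hmem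
    rwa [Ideal.map_span, Set.image_pair, Ideal.span_insert,
      show mkf f = 0 from Ideal.Quotient.eq_zero_iff_mem.mpr (Ideal.subset_span rfl),
      Ideal.span_singleton_eq_bot.mpr rfl, sup_bot_eq, map_mul] at this

end Aux

/-- Let `R` be a DVR with maximal ideal `(π)` and residue field `F = R/πR`, and let
`f ∈ R[X]` be monic, irreducible over the fraction field of `R`, with squarefree reduction
in `F[X]`.  Then `R[X]/(f)` is integrally closed (in its fraction field); consequently it
is a Dedekind domain. -/
theorem quotient_integrallyClosed_of_squarefree_reduction
    {R : Type*} [CommRing R] [IsDomain R] [IsDiscreteValuationRing R]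
    (π : R) (hπ : IsLocalRing.maximalIdeal R = Ideal.span {π})
    (f : R[X]) (hmonic : f.Monic)
    (hirr : Irreducible (f.map (algebraMap R (FractionRing R))))
    (hsqf : Squarefree (f.map (Ideal.Quotient.mk (Ideal.span {π})))) :
    IsIntegrallyClosed (R[X] ⧸ Ideal.span {f}) ∧
      IsDedekindDomain (R[X] ⧸ Ideal.span {f}) := by
  classical
  have hmax : (Ideal.span {π} : Ideal R).IsMaximal := hπ ▸ inferInstance
  have hfirr : Irreducible f := hmonic.irreducible_of_irreducible_map _ f hirr
  have hf0 : f ≠ 0 := hmonic.ne_zero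
  haveI hprime : (Ideal.span {f} : Ideal R[X]).IsPrime :=
    (Ideal.span_singleton_prime hf0).mpr
      (UniqueFactorizationMonoid.irreducible_iff_prime.mp hfirr)
  haveI : IsDomain (R[X] ⧸ Ideal.span {f}) := Ideal.Quotient.isDomain _
  -- finiteness / integrality over R
  haveI : Module.Finite R (R[X] ⧸ Ideal.span {f}) := by
    have : Module.Finite R (AdjoinRoot f) :=
      Module.Finite.of_basis (AdjoinRoot.powerBasis' hmonic).basis
    exact this
  haveI : Algebra.IsIntegral R (R[X] ⧸ Ideal.span {f}) := Algebra.IsIntegral.of_finite _ _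
  -- every nonzero prime of the quotient contains the image of π
  have hπmem : ∀ (P : Ideal (R[X] ⧸ Ideal.span {f})), P ≠ ⊥ → P.IsPrime →
      Ideal.Quotient.mk (Ideal.span {f}) (C π) ∈ P := by
    intro P hP hPp
    obtain ⟨x, hxP, hx0⟩ := P.ne_bot_iff.mp hP
    have hcne : P.comap (algebraMap R (R[X] ⧸ Ideal.span {f})) ≠ ⊥ :=
      Ideal.comap_ne_bot_of_integral_mem hx0 hxP (Algebra.IsIntegral.isIntegral x)
    haveI : (P.comap (algebraMap R (R[X] ⧸ Ideal.span {f}))).IsPrime :=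
      Ideal.IsPrime.comap _ (hK := hPp)
    have hcmax : (P.comap (algebraMap R (R[X] ⧸ Ideal.span {f}))).IsMaximal :=
      Ring.DimensionLEOne.maximalOfPrime hcne inferInstance
    have : P.comap (algebraMap R (R[X] ⧸ Ideal.span {f})) = Ideal.span {π} := by
      rw [← hπ]; exact IsLocalRing.eq_maximalIdeal hcmax
    have hπc : π ∈ P.comap (algebraMap R (R[X] ⧸ Ideal.span {f})) :=
      this ▸ Ideal.subset_span rfl
    have : algebraMap R (R[X] ⧸ Ideal.span {f}) π ∈ P := hπc
    convert this using 1
    rfl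
  -- the localization at each nonzero prime is a DVR
  haveI hdvr : ∀ (P : Ideal (R[X] ⧸ Ideal.span {f})), P ≠ ⊥ → ∀ _ : P.IsPrime,
      IsDiscreteValuationRing (Localization.AtPrime P) := by
    intro P hP hPp
    haveI := hPp
    haveI : IsDomain (Localization.AtPrime P) :=
      IsLocalization.isDomain_of_le_nonZeroDivisors _ P.primeCompl_le_nonZeroDivisors
    haveI : IsNoetherianRing (Localization.AtPrime P) :=
      IsLocalization.isNoetherianRing P.primeCompl _ inferInstance
    have hnf : ¬ IsField (Localization.AtPrime P) :=
      IsLocalization.AtPrime.not_isField _ hP (Localization.AtPrime P)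
    set π' : R[X] ⧸ Ideal.span {f} := Ideal.Quotient.mk (Ideal.span {f}) (C π) with hπ'
    have hπP : π' ∈ P := hπmem P hP hPp
    have hmaxeq : IsLocalRing.maximalIdeal (Localization.AtPrime P) =
        Ideal.span {algebraMap _ (Localization.AtPrime P) π'} := by
      rw [← Localization.AtPrime.map_eq_maximalIdeal]
      apply le_antisymm
      · rw [Ideal.map_le_iff_le_comap]
        intro x hx
        obtain ⟨H, hH, hxH⟩ := aux_key π hmax f hmonic hsqf P hPp hπP x hx
        simp only [Ideal.mem_comap]
        rw [Ideal.mem_span_singleton] at hxH ⊢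
        have hu : IsUnit (algebraMap _ (Localization.AtPrime P) H) :=
          IsLocalization.map_units _ (⟨H, hH⟩ : P.primeCompl)
        have hdvd : algebraMap _ (Localization.AtPrime P) π' ∣
            algebraMap _ (Localization.AtPrime P) x * algebraMap _ (Localization.AtPrime P) H := by
          rw [← map_mul]
          exact (map_dvd _ hxH)
        exact (hu.dvd_mul_right).mp hdvd
      · rw [Ideal.span_le, Set.singleton_subset_iff]
        exact Ideal.mem_map_of_mem _ hπP
    have hprinc : (IsLocalRing.maximalIdeal (Localization.AtPrime P)).IsPrincipal :=
      ⟨⟨_, hmaxeq⟩⟩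
    exact ((IsDiscreteValuationRing.TFAE (Localization.AtPrime P) hnf).out 0 4).mpr hprinc
  haveI : IsDedekindDomainDvr (R[X] ⧸ Ideal.span {f}) :=
    { is_dvr_at_nonzero_prime := hdvr }
  exact ⟨inferInstance, inferInstance⟩
end
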